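/- arXiv:math-ph/0212025 — 6 statements merged into one kernel-verified Lean document; each statement's English description precedes it below -/
import Mathlib

section
/- Let k ∈ {1,2} and let γ: (-2ε,2ε) → E be piecewise C^k (with corner at 0). Then for every δ ∈ (0,ε], the variable-scale mollification γ_δ is of class C^k on all of (-ε,ε). (In particular, for a continuous path that is piecewise C² the mollified path is C², and for a continuous path that is piecewise C¹ the mollified path is C¹.) -/
/-!
Where `σ_δ(s) > 0` (in particular near the corner, `|s| < δ/2`), the substitution
`u = σ_δ(s) t` writes `γ_δ(s)` as the convolution of `γ` with the kernel
`φ(·/σ_δ(s))/σ_δ(s)`, which depends smoothly on `s` and has support in a fixed compact set; such a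
parametric convolution is as smooth as its kernel, whatever the regularity of `γ`.
Away from the corner (`|s| > δ/5`) the bound `σ_δ ≤ δ²/100` keeps the points `s - σ_δ(s) t`,
`|t| ≤ 3/2`, on one side of `0`, where `γ` is `C^k`; cutting `t` off smoothly, `γ_δ` is again a
parametric convolution, now of `φ` with a `C^k` function of `(s, t)`.
-/

open MeasureTheory Set

/-- The variable mollification scale `σ_δ(t) = δ² σ(t/δ)`. -/
noncomputable def sigmaDel (σ : ℝ → ℝ) (δ t : ℝ) : ℝ := δ ^ 2 * σ (t / δ)

/-- The variable-scale mollification `γ_δ(s) = ∫ γ(s - σ_δ(s) t) φ(t) dt` (Bochner integral). -/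
noncomputable def mollify {E : Type*} [NormedAddCommGroup E] [NormedSpace ℝ E]
    (φ σ : ℝ → ℝ) (δ : ℝ) (γ : ℝ → E) (s : ℝ) : E :=
  ∫ t : ℝ, φ t • γ (s - sigmaDel σ δ s * t)

open scoped Convolution

section IntegralSmulComp

variable {E : Type*} [NormedAddCommGroup E] [NormedSpace ℝ E]
  {n : ℕ∞} {φ c : ℝ → ℝ} {γ : ℝ → E} {B : Set ℝ}

theorem integral_div_smul_comp_sub_eq (φ : ℝ → ℝ) (γ : ℝ → E) (s : ℝ) {a : ℝ} (ha : 0 < a) :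
    ∫ u, (φ (u / a) / a) • γ (s - u) = ∫ t, φ t • γ (s - a * t) := by
  have h := Measure.integral_comp_div (fun t => φ t • γ (s - a * t)) a
  simp only [mul_div_cancel₀ _ ha.ne'] at h
  calc ∫ u, (φ (u / a) / a) • γ (s - u) = a⁻¹ • ∫ u, φ (u / a) • γ (s - u) := by
        rw [← integral_smul]
        simp only [smul_smul, inv_mul_eq_div]
    _ = ∫ t, φ t • γ (s - a * t) := by
        rw [h, abs_of_pos ha, smul_smul, inv_mul_cancel₀ ha.ne', one_smul]

theorem integral_smul_congr_of_eqOn {S : Set ℝ} (hφ : Function.support φ ⊆ S) {f f' : ℝ → E}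
    (h : EqOn f f' S) : ∫ t, φ t • f t = ∫ t, φ t • f' t := by
  congr 1 with t
  by_cases ht : φ t = 0
  · simp [ht]
  · rw [h (hφ ht)]

theorem contDiffOn_integral_smul_comp_of_locallyIntegrable {M : ℝ} (hφ : ContDiff ℝ n φ)
    (hφsupp : Function.support φ ⊆ Icc (-1) 1) (hγ : LocallyIntegrable γ) (hB : IsOpen B)
    (hc : ContDiffOn ℝ n c B) (hcpos : ∀ p ∈ B, 0 < c p) (hcM : ∀ p ∈ B, c p ≤ M) :
    ContDiffOn ℝ n (fun s => ∫ t, φ t • γ (s - c s * t)) B := by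
  set g : ℝ → ℝ → ℝ := fun p u => φ (u / c p) / c p
  have hgs : ∀ p u, p ∈ B → u ∉ Icc (-M) M → g p u = 0 := by
    intro p u hp hu
    by_contra hne
    have h1 : |u / c p| ≤ 1 := abs_le.2 (hφsupp (div_ne_zero_iff.1 hne).1)
    rw [abs_div, abs_of_pos (hcpos p hp), div_le_one (hcpos p hp)] at h1
    exact hu (abs_le.1 (h1.trans (hcM p hp)))
  have hg : ContDiffOn ℝ n ↿g (B ×ˢ univ) := by
    have hc' : ContDiffOn ℝ n (fun q : ℝ × ℝ => c q.1) (B ×ˢ univ) :=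
      hc.comp contDiffOn_fst fun q hq => hq.1
    have hne : ∀ q ∈ (B ×ˢ univ : Set (ℝ × ℝ)), c q.1 ≠ 0 := fun q hq => (hcpos q.1 hq.1).ne'
    exact (hφ.comp_contDiffOn (contDiffOn_snd.div hc' hne)).div hc' hne
  refine (contDiffOn_convolution_left_with_param_comp (ContinuousLinearMap.lsmul ℝ ℝ)
    contDiffOn_id hB isCompact_Icc hgs hγ hg).congr fun s hs => ?_
  simp only [convolution_def, ContinuousLinearMap.lsmul_apply, id]
  exact (integral_div_smul_comp_sub_eq φ γ s (hcpos s hs)).symm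

theorem contDiffOn_integral_smul_comp_of_integrableOn {M : ℝ} {K : Set ℝ} (hφ : ContDiff ℝ n φ)
    (hφsupp : Function.support φ ⊆ Icc (-1) 1) (hB : IsOpen B) (hc : ContDiffOn ℝ n c B)
    (hcpos : ∀ p ∈ B, 0 < c p) (hcM : ∀ p ∈ B, c p ≤ M) (hK : MeasurableSet K)
    (hγ : IntegrableOn γ K) (hmaps : ∀ p ∈ B, ∀ t ∈ Icc (-1) 1, p - c p * t ∈ K) :
    ContDiffOn ℝ n (fun s => ∫ t, φ t • γ (s - c s * t)) B := by
  have hγ' : LocallyIntegrable (K.indicator γ) :=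
    ((integrable_indicator_iff hK).2 hγ).locallyIntegrable
  refine (contDiffOn_integral_smul_comp_of_locallyIntegrable hφ hφsupp hγ' hB hc hcpos
    hcM).congr fun s hs => ?_
  exact integral_smul_congr_of_eqOn hφsupp fun t ht => (indicator_of_mem (hmaps s hs t ht) γ).symm

theorem contDiffOn_integral_smul_comp_of_mapsTo {J : Set ℝ} {R : ℝ} (hφ : LocallyIntegrable φ)
    (hφsupp : Function.support φ ⊆ Icc (-1) 1) (hR : 1 < R) (hB : IsOpen B)
    (hc : ContDiffOn ℝ n c B) (hγ : ContDiffOn ℝ n γ J)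
    (hmaps : ∀ p ∈ B, ∀ t, |t| < R → p - c p * t ∈ J) :
    ContDiffOn ℝ n (fun s => ∫ t, φ t • γ (s - c s * t)) B := by
  let χ : ContDiffBump (0 : ℝ) := ⟨1, (1 + R) / 2, one_pos, by linarith⟩
  set g : ℝ → ℝ → E := fun p x => χ x • γ (p + c p * x)
  have hχ0 : ∀ x : ℝ, (1 + R) / 2 < |x| → χ x = 0 := fun x hx =>
    χ.zero_of_le_dist (by rw [Real.dist_eq, sub_zero]; exact hx.le)
  have hgs : ∀ p x, p ∈ B → x ∉ Icc (-((1 + R) / 2)) ((1 + R) / 2) → g p x = 0 := by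
    intro p x _ hx
    rw [mem_Icc, ← abs_le, not_le] at hx
    simp [g, hχ0 x hx]
  have hg : ContDiffOn ℝ n ↿g (B ×ˢ univ) := by
    have hnear : ContDiffOn ℝ n ↿g (B ×ˢ Ioo (-R) R) := by
      refine ((χ.contDiff.comp contDiff_snd).contDiffOn).smul (hγ.comp ?_ ?_)
      · exact contDiffOn_fst.add ((hc.comp contDiffOn_fst fun q hq => hq.1).mul contDiffOn_snd)
      · rintro ⟨p, x⟩ ⟨hp, hx⟩
        simpa using hmaps p hp (-x) (by rw [abs_neg]; exact abs_lt.2 hx)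
    have hfar : ContDiffOn ℝ n ↿g (B ×ˢ {x | (1 + R) / 2 < |x|}) :=
      (contDiffOn_const (c := (0 : E))).congr fun q hq => by
        change χ q.2 • γ _ = 0
        rw [hχ0 q.2 hq.2, zero_smul]
    refine (hnear.union_of_isOpen hfar (hB.prod isOpen_Ioo)
      (hB.prod (isOpen_lt continuous_const continuous_abs))).mono ?_
    rintro ⟨p, x⟩ ⟨hp, -⟩
    rcases lt_or_ge |x| R with hx | hx
    · exact Or.inl ⟨hp, abs_lt.1 hx⟩
    · exact Or.inr ⟨hp, by show (1 + R) / 2 < |x|; linarith⟩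
  refine (contDiffOn_convolution_right_with_param_comp
    (ContinuousLinearMap.lsmul ℝ ℝ : ℝ →L[ℝ] E →L[ℝ] E)
    (contDiffOn_const (c := (0 : ℝ))) hB isCompact_Icc hgs hφ hg).congr fun s _ => ?_
  simp only [convolution_def, ContinuousLinearMap.lsmul_apply]
  refine integral_smul_congr_of_eqOn hφsupp fun t ht => ?_
  have hχ1 : χ (0 - t) = 1 := χ.one_of_mem_closedBall (by simpa using abs_le.2 ht)
  simp only [g, hχ1, one_smul]
  ring_nf

end IntegralSmulComp

section SigmaDel

variable {σ : ℝ → ℝ} {δ : ℝ}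

theorem contDiff_sigmaDel {n : ℕ∞} (hσ : ContDiff ℝ n σ) : ContDiff ℝ n (sigmaDel σ δ) :=
  contDiff_const.mul (hσ.comp (contDiff_id.div_const δ))

theorem sigmaDel_nonneg (hσ : ∀ t, 0 ≤ σ t) (s : ℝ) : 0 ≤ sigmaDel σ δ s :=
  mul_nonneg (sq_nonneg δ) (hσ _)

theorem sigmaDel_le {M : ℝ} (hσ : ∀ t, σ t ≤ M) (s : ℝ) : sigmaDel σ δ s ≤ δ ^ 2 * M :=
  mul_le_mul_of_nonneg_left (hσ _) (sq_nonneg δ)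

theorem sigmaDel_pos_of_abs_lt {r s : ℝ} (hδ : 0 < δ) (hσ : ∀ t, |t| < r → 0 < σ t)
    (hs : |s| < δ * r) : 0 < sigmaDel σ δ s := by
  have : |s / δ| < r := by rwa [abs_div, abs_of_pos hδ, div_lt_iff₀' hδ]
  exact mul_pos (pow_pos hδ 2) (hσ _ this)

end SigmaDel

theorem mollify_contDiffOn_general
    {E : Type*} [NormedAddCommGroup E] [NormedSpace ℝ E]
    (ε : ℝ) (hε1 : ε ≤ 1)
    (φ σ : ℝ → ℝ)
    (hφsm : ContDiff ℝ (⊤ : ℕ∞) φ) (hφsupp : Function.support φ ⊆ Set.Icc (-1) 1)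
    (hσsm : ContDiff ℝ (⊤ : ℕ∞) σ)
    (hσ0 : ∀ t, 0 ≤ σ t) (hσle : ∀ t, σ t ≤ 1/100)
    (hσeq : ∀ t : ℝ, |t| ≤ 1/4 → σ t = 1/100)
    (hσpos : ∀ t : ℝ, 1/4 < |t| → |t| < 1/2 → 0 < σ t)
    (k : ℕ)
    (γ : ℝ → E)
    (hγcont : ContinuousOn γ (Set.Ioo (-(2*ε)) (2*ε)))
    (hγm : ContDiffOn ℝ k γ (Set.Ioc (-(2*ε)) 0))
    (hγp : ContDiffOn ℝ k γ (Set.Ico 0 (2*ε)))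
    (δ : ℝ) (hδ0 : 0 < δ) (hδε : δ ≤ ε)
 :
    ContDiffOn ℝ k (mollify φ σ δ γ) (Set.Ioo (-ε) ε) := by
  have hc : ContDiff ℝ k (sigmaDel σ δ) := contDiff_sigmaDel (hσsm.of_le (mod_cast le_top))
  have hσpos_half : ∀ t, |t| < 1 / 2 → 0 < σ t := fun t ht =>
    (le_or_gt |t| (1 / 4)).elim (fun h => by rw [hσeq t h]; norm_num) (fun h => hσpos t h ht)
  have hshift : ∀ p t, |t| ≤ 3 / 2 → p - sigmaDel σ δ p * t ∈ Icc (p - δ / 50) (p + δ / 50) :=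
    fun p t ht => by
      have h : |sigmaDel σ δ p * t| ≤ δ / 50 := by
        rw [abs_mul, abs_of_nonneg (sigmaDel_nonneg hσ0 p)]
        nlinarith [sigmaDel_le (δ := δ) hσle p, sigmaDel_nonneg (δ := δ) hσ0 p, hδε.trans hε1,
          abs_nonneg t]
      constructor <;> linarith [abs_le.1 h]
  have hinner : ContDiffOn ℝ k (mollify φ σ δ γ) (Ioo (-(δ / 2)) (δ / 2)) :=
    contDiffOn_integral_smul_comp_of_integrableOn (K := Icc (-ε) ε)
      (hφsm.of_le (mod_cast le_top)) hφsupp isOpen_Ioo hc.contDiffOn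
      (fun p hp => sigmaDel_pos_of_abs_lt hδ0 hσpos_half
        (abs_lt.2 (by constructor <;> linarith [hp.1, hp.2])))
      (fun p _ => sigmaDel_le hσle p) measurableSet_Icc
      ((hγcont.mono (Icc_subset_Ioo (by linarith) (by linarith))).integrableOn_compact
        isCompact_Icc)
      (fun p hp t ht => Icc_subset_Icc (by linarith [hp.1]) (by linarith [hp.2])
        (hshift p t (by linarith [abs_le.2 ht])))
  have hright : ContDiffOn ℝ k (mollify φ σ δ γ) (Ioo (δ / 5) ε) :=
    contDiffOn_integral_smul_comp_of_mapsTo hφsm.continuous.locallyIntegrable hφsupp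
      (by norm_num : (1 : ℝ) < 3 / 2) isOpen_Ioo hc.contDiffOn (hγp.mono Ioo_subset_Ico_self)
      (fun p hp t ht => Icc_subset_Ioo (by linarith [hp.1]) (by linarith [hp.2])
        (hshift p t ht.le))
  have hleft : ContDiffOn ℝ k (mollify φ σ δ γ) (Ioo (-ε) (-(δ / 5))) :=
    contDiffOn_integral_smul_comp_of_mapsTo hφsm.continuous.locallyIntegrable hφsupp
      (by norm_num : (1 : ℝ) < 3 / 2) isOpen_Ioo hc.contDiffOn (hγm.mono Ioo_subset_Ioc_self)
      (fun p hp t ht => Icc_subset_Ioo (by linarith [hp.1]) (by linarith [hp.2])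
        (hshift p t ht.le))
  refine ((hleft.union_of_isOpen hinner isOpen_Ioo isOpen_Ioo).union_of_isOpen hright
    (isOpen_Ioo.union isOpen_Ioo) isOpen_Ioo).mono fun s hs => ?_
  rcases lt_or_ge s (-(δ / 5)) with h | h
  · exact Or.inl (Or.inl ⟨hs.1, h⟩)
  rcases lt_or_ge s (δ / 2) with h' | h'
  · exact Or.inl (Or.inr ⟨by linarith, by linarith⟩)
  · exact Or.inr ⟨by linarith, hs.2⟩

theorem mollify_contDiffOn
    {E : Type*} [NormedAddCommGroup E] [NormedSpace ℝ E] [CompleteSpace E]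
    (ε : ℝ) (hε0 : 0 < ε) (hε1 : ε ≤ 1)
    (φ σ : ℝ → ℝ)
    (hφsm : ContDiff ℝ (⊤ : ℕ∞) φ) (hφsupp : Function.support φ ⊆ Set.Icc (-1) 1)
    (hφ0 : ∀ t, 0 ≤ φ t) (hφ1 : ∀ t, φ t ≤ 1) (hφint : (∫ t : ℝ, φ t) = 1)
    (hσsm : ContDiff ℝ (⊤ : ℕ∞) σ) (hσsupp : Function.support σ ⊆ Set.Icc (-(1/2)) (1/2))
    (hσ0 : ∀ t, 0 ≤ σ t) (hσle : ∀ t, σ t ≤ 1/100)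
    (hσeq : ∀ t : ℝ, |t| ≤ 1/4 → σ t = 1/100)
    (hσpos : ∀ t : ℝ, 1/4 < |t| → |t| < 1/2 → 0 < σ t)
    (k : ℕ) (hk : k = 1 ∨ k = 2)
    (γ : ℝ → E)
    (hγcont : ContinuousOn γ (Set.Ioo (-(2*ε)) (2*ε)))
    (hγm : ContDiffOn ℝ k γ (Set.Ioc (-(2*ε)) 0))
    (hγp : ContDiffOn ℝ k γ (Set.Ico 0 (2*ε)))
    (δ : ℝ) (hδ0 : 0 < δ) (hδε : δ ≤ ε)
 :
    ContDiffOn ℝ k (mollify φ σ δ γ) (Set.Ioo (-ε) ε) :=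
  mollify_contDiffOn_general ε hε1 φ σ hφsm hφsupp hσsm hσ0 hσle hσeq hσpos k γ hγcont hγm hγp δ hδ0
    hδε
end

section
/- Let γ: (-2ε,2ε) → E be continuous, and let δ ∈ (0,ε]. For every s ∈ (-ε,ε) with |s| < δ/4 one has γ_δ(s) = ∫_ℝ γ(t) · (100/δ²) · φ(100(s−t)/δ²) dt; consequently, γ_δ is infinitely differentiable (C^∞) on the interval (-δ/4, δ/4). -/
open MeasureTheory Set

/-- Scaling change of variables for the mollifying integral. -/
lemma scale_integral {E : Type*} [NormedAddCommGroup E] [NormedSpace ℝ E]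
    (φ : ℝ → ℝ) {c : ℝ} (hc : 0 < c) (g : ℝ → E) :
    ∫ t : ℝ, ((1/c) * φ (t/c)) • g t = ∫ t : ℝ, φ t • g (c * t) := by
  have h := MeasureTheory.Measure.integral_comp_mul_left
    (fun t : ℝ => ((1/c) * φ (t/c)) • g t) c
  have habs : |c⁻¹| = 1/c := by rw [abs_of_pos (by positivity)]; simp
  have hsimp : (fun x : ℝ => ((1/c) * φ (c * x / c)) • g (c * x))
      = fun x : ℝ => (1/c) • (φ x • g (c * x)) := by
    funext x
    rw [mul_div_cancel_left₀ _ hc.ne', mul_smul]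
  rw [hsimp, integral_smul, habs] at h
  have hcne : (1/c : ℝ) ≠ 0 := by positivity
  exact (smul_right_injective E hcne h).symm

theorem mollify_eq_convolution_and_smooth_near_zero
    {E : Type*} [NormedAddCommGroup E] [NormedSpace ℝ E] [CompleteSpace E]
    (ε : ℝ) (hε0 : 0 < ε) (hε1 : ε ≤ 1)
    (φ σ : ℝ → ℝ)
    (hφsm : ContDiff ℝ (⊤ : ℕ∞) φ) (hφsupp : Function.support φ ⊆ Set.Icc (-1) 1)
    (hφ0 : ∀ t, 0 ≤ φ t) (hφ1 : ∀ t, φ t ≤ 1) (hφint : (∫ t : ℝ, φ t) = 1)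
    (hσsm : ContDiff ℝ (⊤ : ℕ∞) σ) (hσsupp : Function.support σ ⊆ Set.Icc (-(1/2)) (1/2))
    (hσ0 : ∀ t, 0 ≤ σ t) (hσle : ∀ t, σ t ≤ 1/100)
    (hσeq : ∀ t : ℝ, |t| ≤ 1/4 → σ t = 1/100)
    (hσpos : ∀ t : ℝ, 1/4 < |t| → |t| < 1/2 → 0 < σ t)
    (γ : ℝ → E)
    (hγcont : ContinuousOn γ (Set.Ioo (-(2*ε)) (2*ε)))
    (δ : ℝ) (hδ0 : 0 < δ) (hδε : δ ≤ ε)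
 :
    (∀ s ∈ Set.Ioo (-ε) ε, |s| < δ/4 →
      mollify φ σ δ γ s = ∫ t : ℝ, ((100/δ^2) * φ (100 * (s - t)/δ^2)) • γ t) ∧
    ContDiffOn ℝ (⊤ : ℕ∞) (mollify φ σ δ γ) (Set.Ioo (-(δ/4)) (δ/4)) := by
  set c : ℝ := δ^2 / 100 with hcdef
  have hc : 0 < c := by positivity
  have hcle : c ≤ ε/100 := by
    rw [hcdef]
    have : δ^2 ≤ ε := by nlinarith
    linarith
  -- For |s| < δ/4, the scale is constant.
  have hscale : ∀ s : ℝ, |s| < δ/4 → sigmaDel σ δ s = c := by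
    intro s hs
    have : |s / δ| ≤ 1/4 := by
      rw [abs_div, abs_of_pos hδ0, div_le_div_iff₀ (by positivity) (by norm_num)]
      linarith
    rw [sigmaDel, hσeq _ this, hcdef]; ring
  -- The general mollify-as-convolution identity for any target function.
  have key : ∀ (g : ℝ → E) (s : ℝ),
      ∫ t : ℝ, ((1/c) * φ ((s - t)/c)) • g t = ∫ t : ℝ, φ t • g (s - c * t) := by
    intro g s
    have h1 : ∫ t : ℝ, ((1/c) * φ ((s - t)/c)) • g t
        = ∫ t : ℝ, ((1/c) * φ (t/c)) • g (s - t) := by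
      rw [← MeasureTheory.integral_sub_left_eq_self
        (fun t : ℝ => ((1/c) * φ (t/c)) • g (s - t)) volume s]
      simp
    rw [h1, scale_integral φ hc]
  have hck : ∀ s t : ℝ, (100/δ^2) * φ (100 * (s - t)/δ^2) = (1/c) * φ ((s - t)/c) := by
    intro s t
    have h1 : (100 : ℝ)/δ^2 = 1/c := by rw [hcdef]; field_simp
    have h2 : 100 * (s - t)/δ^2 = (s - t)/c := by rw [hcdef]; field_simp
    rw [h1, h2]
  -- First claim.
  have claim1 : ∀ s ∈ Set.Ioo (-ε) ε, |s| < δ/4 →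
      mollify φ σ δ γ s = ∫ t : ℝ, ((100/δ^2) * φ (100 * (s - t)/δ^2)) • γ t := by
    intro s _ hs
    rw [mollify]
    simp_rw [hscale s hs, hck]
    exact (key γ s).symm
  refine ⟨claim1, ?_⟩
  -- Smoothness: compare with a genuine convolution with a truncated γ.
  set K : Set ℝ := Set.Icc (-(3*ε/2)) (3*ε/2) with hK
  set γ' : ℝ → E := K.indicator γ with hγ'
  have hKsub : K ⊆ Set.Ioo (-(2*ε)) (2*ε) := fun x hx => by
    constructor
    · linarith [hx.1]
    · linarith [hx.2]
  have hγ'int : Integrable γ' := by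
    rw [hγ', integrable_indicator_iff measurableSet_Icc]
    exact ContinuousOn.integrableOn_compact isCompact_Icc (hγcont.mono hKsub)
  set k : ℝ → ℝ := fun x => (1/c) * φ (x/c) with hk
  have hksm : ContDiff ℝ (⊤ : ℕ∞) k :=
    contDiff_const.mul (hφsm.comp (contDiff_id.div_const c))
  have hksupp : HasCompactSupport k := by
    apply HasCompactSupport.intro (isCompact_Icc (a := -c) (b := c))
    intro x hx
    have hφx : φ (x/c) = 0 := by
      by_contra h
      rcases hφsupp h with ⟨h1, h2⟩
      exact hx ⟨by linarith [(le_div_iff₀ hc).mp h1], (div_le_one hc).mp h2⟩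
    simp [hk, hφx]
  have hconv : ContDiff ℝ (⊤ : ℕ∞)
      (convolution k γ' (ContinuousLinearMap.lsmul ℝ ℝ) volume) :=
    hksupp.contDiff_convolution_left _ hksm hγ'int.locallyIntegrable
  apply (hconv.contDiffOn (s := Set.Ioo (-(δ/4)) (δ/4))).congr
  intro s hs
  have hs' : |s| < δ/4 := by
    rw [abs_lt]; exact ⟨hs.1, hs.2⟩
  have hconvs : convolution k γ' (ContinuousLinearMap.lsmul ℝ ℝ) volume s
      = ∫ t : ℝ, φ t • γ' (s - c * t) := by
    rw [convolution_def]
    simp_rw [ContinuousLinearMap.lsmul_apply, hk]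
    have h1 : ∫ t : ℝ, ((1/c) * φ (t/c)) • γ' (s - t)
        = ∫ t : ℝ, φ t • γ' (s - c * t) := scale_integral φ hc (fun t => γ' (s - t))
    exact h1
  rw [hconvs, mollify]
  simp_rw [hscale s hs']
  apply integral_congr_ae
  filter_upwards with t
  by_cases hφt : φ t = 0
  · simp [hφt]
  · rcases hφsupp hφt with ⟨h1, h2⟩
    have ht1 : |t| ≤ 1 := abs_le.mpr ⟨h1, h2⟩
    have hct : |c * t| ≤ c := by
      rw [abs_mul, abs_of_pos hc]
      nlinarith [abs_nonneg t]
    have hmem : s - c * t ∈ K := by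
      have h3 := abs_lt.mp hs'
      have h4 := abs_le.mp hct
      constructor
      · linarith [hcle]
      · linarith [hcle]
    rw [hγ', Set.indicator_of_mem hmem]
end

section
/- Let k ∈ {1,2} and let γ: (-2ε,2ε) → E be piecewise C^k (with corner at 0). Then for every δ ∈ (0,ε], the variable-scale mollification γ_δ is of class C^k on the set (-ε,ε) \ [-δ²/100, δ²/100]. -/
open MeasureTheory Set

open Convolution

/-- Auxiliary lemma: smoothness at points on the positive side of the corner. -/
lemma mollify_contDiffAt_pos
    {E : Type*} [NormedAddCommGroup E] [NormedSpace ℝ E] [CompleteSpace E]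
    (ε : ℝ) (hε0 : 0 < ε) (hε1 : ε ≤ 1)
    (φ σ : ℝ → ℝ)
    (hφsm : ContDiff ℝ (⊤ : ℕ∞) φ) (hφsupp : Function.support φ ⊆ Set.Icc (-1) 1)
    (hσsm : ContDiff ℝ (⊤ : ℕ∞) σ)
    (hσ0 : ∀ t, 0 ≤ σ t) (hσle : ∀ t, σ t ≤ 1/100)
    (k : ℕ) (γ : ℝ → E) (hγ : ContDiffOn ℝ k γ (Set.Ioo 0 (2*ε)))
    (δ : ℝ) (hδ0 : 0 < δ) (hδε : δ ≤ ε)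
    (s₀ : ℝ) (hs1 : δ^2/100 < s₀) (hs2 : s₀ < ε) :
    ContDiffAt ℝ k (mollify φ σ δ γ) s₀ := by
  set a : ℝ := (δ^2/100 + s₀)/2 with ha_def
  set b : ℝ := (s₀ + ε)/2 with hb_def
  have ha1 : δ^2/100 < a := by rw [ha_def]; linarith
  have ha2 : a < s₀ := by rw [ha_def]; linarith
  have hb1 : s₀ < b := by rw [hb_def]; linarith
  have hb2 : b < ε := by rw [hb_def]; linarith
  have hδ2 : δ^2/100 ≤ ε := by nlinarith
  -- the kernel with parameter
  set g : ℝ → ℝ → E := fun s u => φ (-u) • γ (s + sigmaDel σ δ s * u) with hg_def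
  have hsig : ∀ s : ℝ, 0 ≤ sigmaDel σ δ s ∧ sigmaDel σ δ s ≤ δ^2/100 := by
    intro s
    constructor
    · exact mul_nonneg (sq_nonneg δ) (hσ0 _)
    · have := hσle (s/δ)
      have h2 : (0:ℝ) ≤ δ^2 := sq_nonneg δ
      calc δ^2 * σ (s/δ) ≤ δ^2 * (1/100) := by nlinarith
        _ = δ^2/100 := by ring
  have hgs : ∀ p x, p ∈ Set.Ioo a b → x ∉ Set.Icc (-1:ℝ) 1 → g p x = 0 := by
    intro p x _ hx
    have hφ0 : φ (-x) = 0 := by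
      by_contra h
      have hmem := hφsupp h
      rw [Set.mem_Icc] at hmem
      exact hx (Set.mem_Icc.2 ⟨by linarith [hmem.2], by linarith [hmem.1]⟩)
    simp [hg_def, hφ0]
  have hf : LocallyIntegrable (fun _ : ℝ => (1:ℝ)) volume := locallyIntegrable_const _
  have hg : ContDiffOn ℝ k (↿g) (Set.Ioo a b ×ˢ Set.univ) := by
    intro p hp
    obtain ⟨hp1, -⟩ := hp
    apply ContDiffAt.contDiffWithinAt
    rcases le_or_gt |p.2| 1 with hu | hu
    · -- smooth region
      have harg : p.1 + sigmaDel σ δ p.1 * p.2 ∈ Set.Ioo 0 (2*ε) := by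
        obtain ⟨hpa, hpb⟩ := hp1
        obtain ⟨hs0, hsle⟩ := hsig p.1
        have habs : |sigmaDel σ δ p.1 * p.2| ≤ δ^2/100 := by
          rw [abs_mul]
          calc |sigmaDel σ δ p.1| * |p.2| ≤ (δ^2/100) * 1 := by
                apply mul_le_mul _ hu (abs_nonneg _) (by positivity)
                rw [abs_of_nonneg hs0]; exact hsle
            _ = δ^2/100 := by ring
        constructor
        · have := (abs_le.1 habs).1; linarith
        · have := (abs_le.1 habs).2; linarith
      have hγat : ContDiffAt ℝ k γ (p.1 + sigmaDel σ δ p.1 * p.2) :=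
        hγ.contDiffAt (isOpen_Ioo.mem_nhds harg)
      have hh : ContDiff ℝ (⊤:ℕ∞) (fun q : ℝ × ℝ => q.1 + sigmaDel σ δ q.1 * q.2) := by
        simp only [sigmaDel]
        exact contDiff_fst.add
          (((contDiff_const.mul (hσsm.comp (contDiff_fst.div_const δ))).mul contDiff_snd))
      have h1 : ContDiffAt ℝ k (fun q : ℝ × ℝ => φ (-q.2)) p :=
        (((hφsm.comp contDiff_neg).comp contDiff_snd).of_le (by exact_mod_cast le_top)).contDiffAt
      have h2 : ContDiffAt ℝ k (fun q : ℝ × ℝ => γ (q.1 + sigmaDel σ δ q.1 * q.2)) p :=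
        hγat.comp p ((hh.of_le (by exact_mod_cast le_top)).contDiffAt)
      exact h1.smul h2
    · -- vanishing region
      have hev : ↿g =ᶠ[nhds p] (fun _ => (0:E)) := by
        have hopen : IsOpen {q : ℝ × ℝ | 1 < |q.2|} :=
          isOpen_lt continuous_const (continuous_snd.abs)
        filter_upwards [hopen.mem_nhds hu] with q hq
        have hφ0 : φ (-q.2) = 0 := by
          by_contra h
          have := hφsupp h
          simp only [Set.mem_Icc] at this
          have : |q.2| ≤ 1 := abs_le.2 ⟨by linarith [this.2], by linarith [this.1]⟩
          exact absurd this (not_le.2 hq)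
        show φ (-q.2) • γ (q.1 + sigmaDel σ δ q.1 * q.2) = 0
        rw [hφ0, zero_smul]
      exact contDiffAt_const.congr_of_eventuallyEq hev
  have H : ContDiffOn ℝ k
      (fun s => ((fun _ : ℝ => (1:ℝ)) ⋆[ContinuousLinearMap.lsmul ℝ ℝ, volume] g s) ((fun _ => (0:ℝ)) s))
      (Set.Ioo a b) :=
    contDiffOn_convolution_right_with_param_comp (ContinuousLinearMap.lsmul ℝ ℝ)
      contDiffOn_const isOpen_Ioo isCompact_Icc hgs hf hg
  have hmol : ∀ s : ℝ, mollify φ σ δ γ s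
      = ((fun _ : ℝ => (1:ℝ)) ⋆[ContinuousLinearMap.lsmul ℝ ℝ, volume] g s) 0 := by
    intro s
    rw [convolution_def]
    simp only [mollify, hg_def, ContinuousLinearMap.lsmul_apply, one_smul, zero_sub, neg_neg,
      mul_neg, ← sub_eq_add_neg]
  exact ((H.congr (fun s _ => hmol s)).contDiffAt (isOpen_Ioo.mem_nhds ⟨ha2, hb1⟩))

theorem mollify_contDiffOn_away_from_corner
    {E : Type*} [NormedAddCommGroup E] [NormedSpace ℝ E] [CompleteSpace E]
    (ε : ℝ) (hε0 : 0 < ε) (hε1 : ε ≤ 1)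
    (φ σ : ℝ → ℝ)
    (hφsm : ContDiff ℝ (⊤ : ℕ∞) φ) (hφsupp : Function.support φ ⊆ Set.Icc (-1) 1)
    (hφ0 : ∀ t, 0 ≤ φ t) (hφ1 : ∀ t, φ t ≤ 1) (hφint : (∫ t : ℝ, φ t) = 1)
    (hσsm : ContDiff ℝ (⊤ : ℕ∞) σ) (hσsupp : Function.support σ ⊆ Set.Icc (-(1/2)) (1/2))
    (hσ0 : ∀ t, 0 ≤ σ t) (hσle : ∀ t, σ t ≤ 1/100)
    (hσeq : ∀ t : ℝ, |t| ≤ 1/4 → σ t = 1/100)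
    (hσpos : ∀ t : ℝ, 1/4 < |t| → |t| < 1/2 → 0 < σ t)
    (k : ℕ) (hk : k = 1 ∨ k = 2)
    (γ : ℝ → E)
    (hγcont : ContinuousOn γ (Set.Ioo (-(2*ε)) (2*ε)))
    (hγm : ContDiffOn ℝ k γ (Set.Ioc (-(2*ε)) 0))
    (hγp : ContDiffOn ℝ k γ (Set.Ico 0 (2*ε)))
    (δ : ℝ) (hδ0 : 0 < δ) (hδε : δ ≤ ε)
 :
    ContDiffOn ℝ k (mollify φ σ δ γ)
      (Set.Ioo (-ε) ε \ Set.Icc (-(δ^2/100)) (δ^2/100)) := by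
  intro s₀ hs₀
  obtain ⟨⟨h1, h2⟩, h3⟩ := hs₀
  apply ContDiffAt.contDiffWithinAt
  simp only [Set.mem_Icc, not_and_or, not_le] at h3
  rcases h3 with h3 | h3
  · -- negative side: reduce to the positive side by reflection
    set φ' : ℝ → ℝ := fun t => φ (-t) with hφ'_def
    set σ' : ℝ → ℝ := fun t => σ (-t) with hσ'_def
    set γ' : ℝ → E := fun t => γ (-t) with hγ'_def
    have hrefl : ∀ s : ℝ, mollify φ σ δ γ s = mollify φ' σ' δ γ' (-s) := by
      intro s
      have hsd : sigmaDel σ' δ (-s) = sigmaDel σ δ s := by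
        simp [sigmaDel, hσ'_def, neg_div]
      have hpt : ∀ t : ℝ, φ' t • γ' (-s - sigmaDel σ' δ (-s) * t)
          = (fun u : ℝ => φ u • γ (s - sigmaDel σ δ s * u)) (-t) := by
        intro t
        rw [hsd]
        simp only [hφ'_def, hγ'_def, neg_neg]
        congr 2
        ring
      calc mollify φ σ δ γ s
          = ∫ t : ℝ, (fun u : ℝ => φ u • γ (s - sigmaDel σ δ s * u)) (-t) :=
            (integral_neg_eq_self _ _).symm
        _ = ∫ t : ℝ, φ' t • γ' (-s - sigmaDel σ' δ (-s) * t) := by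
            simp only [← hpt]
        _ = mollify φ' σ' δ γ' (-s) := rfl
    have hγ' : ContDiffOn ℝ k γ' (Set.Ioo 0 (2*ε)) := by
      apply hγm.comp contDiff_neg.contDiffOn
      intro u hu
      obtain ⟨hu1, hu2⟩ := hu
      rw [Set.mem_Ioc]
      constructor
      · show -(2*ε) < -u; linarith
      · show -u ≤ 0; linarith
    have hφ'supp : Function.support φ' ⊆ Set.Icc (-1:ℝ) 1 := by
      intro x hx
      have := hφsupp hx
      simp only [Set.mem_Icc] at this ⊢
      constructor <;> linarith [this.1, this.2]
    have hA : ContDiffAt ℝ k (mollify φ' σ' δ γ') (-s₀) := by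
      apply mollify_contDiffAt_pos ε hε0 hε1 φ' σ' (hφsm.comp contDiff_neg) hφ'supp
        (hσsm.comp contDiff_neg) (fun t => hσ0 (-t)) (fun t => hσle (-t)) k γ' hγ' δ hδ0 hδε
        (-s₀) (by linarith) (by linarith)
    have : mollify φ σ δ γ = (mollify φ' σ' δ γ') ∘ (fun s : ℝ => -s) := funext hrefl
    rw [this]
    exact hA.comp s₀ (contDiff_neg.contDiffAt)
  · -- positive side
    exact mollify_contDiffAt_pos ε hε0 hε1 φ σ hφsm hφsupp hσsm hσ0 hσle k γ
      (hγp.mono Set.Ioo_subset_Ico_self) δ hδ0 hδε s₀ h3 h2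
end

section
/- Let γ: (-2ε,2ε) → E be piecewise C¹ (with corner at 0) and set M₁ = sup_{u ∈ (-2ε,2ε) \ {0}} ‖γ′(u)‖ (assumed finite) and S₁ = sup_ℝ |σ′|. Then for every δ ∈ (0,ε] and every t ∈ (-ε,ε), ‖γ_δ′(t)‖ ≤ (1 + δ·S₁)·M₁. In particular the first derivatives of the mollified paths are bounded by a constant independent of δ. -/
open MeasureTheory Set

/-! The path `γ` is `M₁`-Lipschitz on `(-2ε, 2ε)` by the mean value inequality on either side of
the corner, and `σ_δ` is `δ S₁`-Lipschitz. As `σ_δ ≤ δ²/100`, every point `s - σ_δ(s) t` with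
`|t| ≤ 1` stays in `(-2ε, 2ε)`, so the integrand moves by at most `(1 + δ S₁) M₁ |s₁ - s₂|`;
averaging against the probability density `φ` makes `γ_δ` Lipschitz on `(-ε, ε)` with that
constant, which then bounds its derivative (also where `deriv` takes its junk value `0`). -/

open scoped NNReal

section MeanValue

variable {E : Type*} [NormedAddCommGroup E] [NormedSpace ℝ E] {f f' : ℝ → E} {a b c C : ℝ}

theorem norm_sub_le_of_hasDerivAt_Ioo (hab : a ≤ b) (hf : ContinuousOn f (Icc a b))
    (hf' : ∀ x ∈ Ioo a b, HasDerivAt f (f' x) x) (bound : ∀ x ∈ Ioo a b, ‖f' x‖ ≤ C) :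
    ‖f b - f a‖ ≤ C * (b - a) := by
  rcases hab.eq_or_lt with rfl | hab
  · simp
  -- the mean value inequality on `[x, b]` for `a < x`, then let `x → a`
  have hinner : ∀ x ∈ Ioo a b, ‖f b - f x‖ ≤ C * (b - x) := fun x hx =>
    norm_image_sub_le_of_norm_deriv_right_le_segment (hf.mono (Icc_subset_Icc_left hx.1.le))
      (fun y hy => (hf' y ⟨hx.1.trans_le hy.1, hy.2⟩).hasDerivWithinAt)
      (fun y hy => bound y ⟨hx.1.trans_le hy.1, hy.2⟩) b (right_mem_Icc.2 hx.2.le)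
  have hcont : ContinuousWithinAt f (Ioo a b) a :=
    (hf a (left_mem_Icc.2 hab.le)).mono Ioo_subset_Icc_self
  refine ContinuousWithinAt.closure_le (by rw [closure_Ioo hab.ne]; exact left_mem_Icc.2 hab.le)
    (continuousWithinAt_const.sub hcont).norm ?_ hinner
  exact continuousWithinAt_const.mul (continuousWithinAt_const.sub continuousWithinAt_id)

theorem norm_sub_le_of_hasDerivAt_off_point (hab : a ≤ b) (hf : ContinuousOn f (Icc a b))
    (hf' : ∀ x ∈ Ioo a b, x ≠ c → HasDerivAt f (f' x) x)
    (bound : ∀ x ∈ Ioo a b, x ≠ c → ‖f' x‖ ≤ C) :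
    ‖f b - f a‖ ≤ C * (b - a) := by
  by_cases hc : c ∈ Ioo a b
  · have hleft : ‖f c - f a‖ ≤ C * (c - a) :=
      norm_sub_le_of_hasDerivAt_Ioo hc.1.le (hf.mono (Icc_subset_Icc_right hc.2.le))
        (fun x hx => hf' x ⟨hx.1, hx.2.trans hc.2⟩ hx.2.ne)
        (fun x hx => bound x ⟨hx.1, hx.2.trans hc.2⟩ hx.2.ne)
    have hright : ‖f b - f c‖ ≤ C * (b - c) :=
      norm_sub_le_of_hasDerivAt_Ioo hc.2.le (hf.mono (Icc_subset_Icc_left hc.1.le))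
        (fun x hx => hf' x ⟨hc.1.trans hx.1, hx.2⟩ hx.1.ne')
        (fun x hx => bound x ⟨hc.1.trans hx.1, hx.2⟩ hx.1.ne')
    calc ‖f b - f a‖ ≤ ‖f b - f c‖ + ‖f c - f a‖ := norm_sub_le_norm_sub_add_norm_sub _ _ _
      _ ≤ C * (b - a) := by linarith
  · exact norm_sub_le_of_hasDerivAt_Ioo hab hf
      (fun x hx => hf' x hx fun h => hc (h ▸ hx)) (fun x hx => bound x hx fun h => hc (h ▸ hx))

theorem lipschitzOnWith_of_hasDerivAt_off_point {s : Set ℝ} {C : ℝ≥0} (hs : s.OrdConnected)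
    (hf : ContinuousOn f s) (hf' : ∀ x ∈ s, x ≠ c → HasDerivAt f (f' x) x)
    (bound : ∀ x ∈ s, x ≠ c → ‖f' x‖ ≤ C) : LipschitzOnWith C f s := by
  have key : ∀ x ∈ s, ∀ y ∈ s, x ≤ y → dist (f y) (f x) ≤ C * dist y x := by
    intro x hx y hy hxy
    have hsub : Icc x y ⊆ s := hs.out hx hy
    rw [dist_eq_norm, Real.dist_eq, abs_of_nonneg (sub_nonneg.2 hxy)]
    exact norm_sub_le_of_hasDerivAt_off_point hxy (hf.mono hsub)
      (fun z hz => hf' z (hsub (Ioo_subset_Icc_self hz)))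
      (fun z hz => bound z (hsub (Ioo_subset_Icc_self hz)))
  refine LipschitzOnWith.of_dist_le_mul fun x hx y hy => ?_
  rcases le_total x y with hxy | hyx
  · rw [dist_comm, dist_comm x]; exact key x hx y hy hxy
  · exact key y hy x hx hyx

end MeanValue

section VariableScaleMollifier

variable {E : Type*} [NormedAddCommGroup E] [NormedSpace ℝ E] {φ ρ : ℝ → ℝ} {γ : ℝ → E}
  {U V : Set ℝ}

theorem integrable_smul_comp_sub_mul (hφ : Integrable φ)
    (hφsupp : Function.support φ ⊆ Icc (-1) 1) (hγ : ContinuousOn γ U) {s r : ℝ}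
    (hmaps : ∀ t ∈ Icc (-1) 1, s - r * t ∈ U) :
    Integrable fun t => φ t • γ (s - r * t) := by
  have hsupp : Function.support (fun t => φ t • γ (s - r * t)) ⊆ Icc (-1) 1 :=
    (Function.support_smul_subset_left _ _).trans hφsupp
  refine (integrableOn_iff_integrable_of_support_subset hsupp).1 ?_
  exact hφ.integrableOn.smul_continuousOn (hγ.comp (by fun_prop) hmaps) isCompact_Icc

theorem LipschitzOnWith.integral_smul_comp_sub_mul {L Λ : ℝ≥0} (hφ0 : ∀ t, 0 ≤ φ t)
    (hφint : ∫ t, φ t = 1) (hφsupp : Function.support φ ⊆ Icc (-1) 1)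
    (hγ : LipschitzOnWith L γ U) (hρ : LipschitzOnWith Λ ρ V)
    (hmaps : ∀ s ∈ V, ∀ t ∈ Icc (-1) 1, s - ρ s * t ∈ U) :
    LipschitzOnWith (L * (1 + Λ)) (fun s => ∫ t, φ t • γ (s - ρ s * t)) V := by
  have hφ : Integrable φ := .of_integral_ne_zero (by rw [hφint]; exact one_ne_zero)
  have hint : ∀ s ∈ V, Integrable fun t => φ t • γ (s - ρ s * t) := fun s hs =>
    integrable_smul_comp_sub_mul hφ hφsupp hγ.continuousOn (hmaps s hs)
  refine LipschitzOnWith.of_dist_le_mul fun s₁ hs₁ s₂ hs₂ => ?_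
  have hpoint : ∀ t, ‖φ t • γ (s₁ - ρ s₁ * t) - φ t • γ (s₂ - ρ s₂ * t)‖
      ≤ φ t * (L * (1 + Λ) * dist s₁ s₂) := by
    intro t
    rw [← smul_sub, norm_smul, Real.norm_of_nonneg (hφ0 t)]
    by_cases ht : t ∈ Icc (-1) 1
    · refine mul_le_mul_of_nonneg_left ?_ (hφ0 t)
      have hρ₁₂ : |ρ s₁ - ρ s₂| ≤ Λ * dist s₁ s₂ := hρ.dist_le_mul s₁ hs₁ s₂ hs₂
      have hargs : dist (s₁ - ρ s₁ * t) (s₂ - ρ s₂ * t) ≤ (1 + Λ) * dist s₁ s₂ := by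
        have ht1 : |t| ≤ 1 := abs_le.2 ht
        rw [Real.dist_eq] at hρ₁₂ ⊢
        calc |s₁ - ρ s₁ * t - (s₂ - ρ s₂ * t)| = |(s₁ - s₂) - (ρ s₁ - ρ s₂) * t| := by ring_nf
          _ ≤ |s₁ - s₂| + |ρ s₁ - ρ s₂| * |t| := by rw [← abs_mul]; exact abs_sub _ _
          _ ≤ |s₁ - s₂| + Λ * |s₁ - s₂| * 1 := by gcongr
          _ = (1 + Λ) * |s₁ - s₂| := by ring
      calc ‖γ (s₁ - ρ s₁ * t) - γ (s₂ - ρ s₂ * t)‖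
          ≤ L * dist (s₁ - ρ s₁ * t) (s₂ - ρ s₂ * t) := by
            rw [← dist_eq_norm]
            exact hγ.dist_le_mul _ (hmaps s₁ hs₁ t ht) _ (hmaps s₂ hs₂ t ht)
        _ ≤ L * ((1 + Λ) * dist s₁ s₂) := by gcongr
        _ = L * (1 + Λ) * dist s₁ s₂ := by ring
    · simp [Function.notMem_support.1 fun h => ht (hφsupp h)]
  calc dist (∫ t, φ t • γ (s₁ - ρ s₁ * t)) (∫ t, φ t • γ (s₂ - ρ s₂ * t))
      = ‖∫ t, (φ t • γ (s₁ - ρ s₁ * t) - φ t • γ (s₂ - ρ s₂ * t))‖ := by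
        rw [dist_eq_norm, integral_sub (hint s₁ hs₁) (hint s₂ hs₂)]
    _ ≤ ∫ t, φ t * (L * (1 + Λ) * dist s₁ s₂) :=
        norm_integral_le_of_norm_le (hφ.mul_const _) (.of_forall hpoint)
    _ = L * (1 + Λ) * dist s₁ s₂ := by rw [integral_mul_const, hφint, one_mul]
    _ = ↑(L * (1 + Λ)) * dist s₁ s₂ := by push_cast; ring

end VariableScaleMollifier

theorem HasCompactSupport.abs_deriv_le_iSup {σ : ℝ → ℝ} (hσ : ContDiff ℝ 1 σ)
    (hσc : HasCompactSupport σ) (u : ℝ) : |deriv σ u| ≤ ⨆ v, |deriv σ v| := by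
  have hbdd : BddAbove (range fun v => ‖deriv σ v‖) :=
    (hσ.continuous_deriv le_rfl).norm.bddAbove_range_of_hasCompactSupport hσc.deriv.norm
  exact le_ciSup hbdd u

section SigmaDel

variable {σ : ℝ → ℝ} {δ : ℝ}

theorem hasDerivAt_sigmaDel (hσ : Differentiable ℝ σ) (hδ : δ ≠ 0) (s : ℝ) :
    HasDerivAt (sigmaDel σ δ) (δ * deriv σ (s / δ)) s := by
  have h : HasDerivAt (sigmaDel σ δ) (δ ^ 2 * (deriv σ (s / δ) * (1 / δ))) s :=
    ((hσ (s / δ)).hasDerivAt.comp s ((hasDerivAt_id' s).div_const δ)).const_mul _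
  convert h using 1
  field_simp

theorem lipschitzWith_sigmaDel {S : ℝ} (hσ : Differentiable ℝ σ) (hS : ∀ u, |deriv σ u| ≤ S)
    (hδ : 0 < δ) : LipschitzWith (δ * S).toNNReal (sigmaDel σ δ) := by
  refine LipschitzWith.of_dist_le' fun x y => ?_
  have hderiv : ∀ s, deriv (sigmaDel σ δ) s = δ * deriv σ (s / δ) := fun s =>
    (hasDerivAt_sigmaDel hσ hδ.ne' s).deriv
  refine (convex_univ.norm_image_sub_le_of_norm_deriv_le
    (fun s _ => (hasDerivAt_sigmaDel hσ hδ.ne' s).differentiableAt) (fun s _ => ?_)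
    (mem_univ y) (mem_univ x))
  rw [hderiv, norm_mul, Real.norm_of_nonneg hδ.le, Real.norm_eq_abs]
  exact mul_le_mul_of_nonneg_left (hS _) hδ.le

theorem sub_sigmaDel_mul_mem_Ioo (hσ0 : ∀ t, 0 ≤ σ t) (hσle : ∀ t, σ t ≤ 1 / 100) {ε : ℝ}
    (hδ0 : 0 < δ) (hδε : δ ≤ ε) (hε1 : ε ≤ 1) {s t : ℝ} (hs : s ∈ Ioo (-ε) ε)
    (ht : t ∈ Icc (-1) 1) : s - sigmaDel σ δ s * t ∈ Ioo (-(2 * ε)) (2 * ε) := by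
  have hρ : |sigmaDel σ δ s| ≤ ε := by
    rw [sigmaDel, abs_of_nonneg (mul_nonneg (sq_nonneg δ) (hσ0 _))]
    nlinarith [hσ0 (s / δ), hσle (s / δ)]
  have hρt : |sigmaDel σ δ s * t| ≤ ε := by
    rw [abs_mul]; nlinarith [abs_le.2 ht, abs_nonneg t, abs_nonneg (sigmaDel σ δ s)]
  obtain ⟨h₁, h₂⟩ := abs_le.1 hρt
  constructor <;> linarith [hs.1, hs.2]

end SigmaDel

theorem mollify_deriv_bound_general
    {E : Type*} [NormedAddCommGroup E] [NormedSpace ℝ E]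
    (ε : ℝ) (hε1 : ε ≤ 1)
    (φ σ : ℝ → ℝ)
    (hφsupp : Function.support φ ⊆ Set.Icc (-1) 1)
    (hφ0 : ∀ t, 0 ≤ φ t) (hφint : (∫ t : ℝ, φ t) = 1)
    (hσsm : ContDiff ℝ (⊤ : ℕ∞) σ) (hσsupp : Function.support σ ⊆ Set.Icc (-(1/2)) (1/2))
    (hσ0 : ∀ t, 0 ≤ σ t) (hσle : ∀ t, σ t ≤ 1/100)
    (γ : ℝ → E)
    (hγcont : ContinuousOn γ (Set.Ioo (-(2*ε)) (2*ε)))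
    (γ' : ℝ → E)
    (hγ'1 : ∀ u ∈ Set.Ioo (-(2*ε)) (2*ε), u ≠ 0 → HasDerivAt γ (γ' u) u)
    (M₁ S₁ : ℝ)
    (hM₁ : M₁ = sSup ((fun u => ‖γ' u‖) '' (Set.Ioo (-(2*ε)) (2*ε) \ {0})))
    (hM₁bd : BddAbove ((fun u => ‖γ' u‖) '' (Set.Ioo (-(2*ε)) (2*ε) \ {0})))
    (hS₁ : S₁ = ⨆ u : ℝ, |deriv σ u|)
    (δ : ℝ) (hδ0 : 0 < δ) (hδε : δ ≤ ε)
 :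
    ∀ t ∈ Set.Ioo (-ε) ε, ‖deriv (mollify φ σ δ γ) t‖ ≤ (1 + δ * S₁) * M₁ := by
  intro t ht
  have hσ1 : ContDiff ℝ 1 σ := hσsm.of_le (by exact_mod_cast le_top)
  have hM₁0 : 0 ≤ M₁ := hM₁ ▸ Real.sSup_nonneg (by rintro _ ⟨u, -, rfl⟩; exact norm_nonneg _)
  have hS₁0 : 0 ≤ S₁ := hS₁ ▸ Real.iSup_nonneg fun u => abs_nonneg _
  have hγ : LipschitzOnWith M₁.toNNReal γ (Ioo (-(2 * ε)) (2 * ε)) :=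
    lipschitzOnWith_of_hasDerivAt_off_point ordConnected_Ioo hγcont hγ'1 fun u hu hu0 =>
      (hM₁ ▸ le_csSup hM₁bd ⟨u, ⟨hu, hu0⟩, rfl⟩).trans (Real.le_coe_toNNReal _)
  have hσc : HasCompactSupport σ := .of_support_subset_isCompact isCompact_Icc hσsupp
  have hρ : LipschitzWith (δ * S₁).toNNReal (sigmaDel σ δ) :=
    lipschitzWith_sigmaDel (hσ1.differentiable one_ne_zero)
      (fun u => hS₁ ▸ hσc.abs_deriv_le_iSup hσ1 u) hδ0
  have hmollify := hγ.integral_smul_comp_sub_mul hφ0 hφint hφsupp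
    (hρ.lipschitzOnWith (s := Ioo (-ε) ε))
    fun s hs τ hτ => sub_sigmaDel_mul_mem_Ioo hσ0 hσle hδ0 hδε hε1 hs hτ
  calc ‖deriv (mollify φ σ δ γ) t‖ ≤ ↑(M₁.toNNReal * (1 + (δ * S₁).toNNReal)) :=
        norm_deriv_le_of_lipschitzOn (isOpen_Ioo.mem_nhds ht) hmollify
    _ = (1 + δ * S₁) * M₁ := by
        push_cast
        rw [Real.coe_toNNReal _ hM₁0, Real.coe_toNNReal _ (mul_nonneg hδ0.le hS₁0), mul_comm]

theorem mollify_deriv_bound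
    {E : Type*} [NormedAddCommGroup E] [NormedSpace ℝ E] [CompleteSpace E]
    (ε : ℝ) (hε0 : 0 < ε) (hε1 : ε ≤ 1)
    (φ σ : ℝ → ℝ)
    (hφsm : ContDiff ℝ (⊤ : ℕ∞) φ) (hφsupp : Function.support φ ⊆ Set.Icc (-1) 1)
    (hφ0 : ∀ t, 0 ≤ φ t) (hφ1 : ∀ t, φ t ≤ 1) (hφint : (∫ t : ℝ, φ t) = 1)
    (hσsm : ContDiff ℝ (⊤ : ℕ∞) σ) (hσsupp : Function.support σ ⊆ Set.Icc (-(1/2)) (1/2))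
    (hσ0 : ∀ t, 0 ≤ σ t) (hσle : ∀ t, σ t ≤ 1/100)
    (hσeq : ∀ t : ℝ, |t| ≤ 1/4 → σ t = 1/100)
    (hσpos : ∀ t : ℝ, 1/4 < |t| → |t| < 1/2 → 0 < σ t)
    (γ : ℝ → E)
    (hγcont : ContinuousOn γ (Set.Ioo (-(2*ε)) (2*ε)))
    (hγm : ContDiffOn ℝ 1 γ (Set.Ioc (-(2*ε)) 0))
    (hγp : ContDiffOn ℝ 1 γ (Set.Ico 0 (2*ε)))
    (γ' : ℝ → E)
    (hγ'1 : ∀ u ∈ Set.Ioo (-(2*ε)) (2*ε), u ≠ 0 → HasDerivAt γ (γ' u) u)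
    (hγ'0 : HasDerivWithinAt γ (γ' 0) (Set.Ici 0) 0)
    (M₁ S₁ : ℝ)
    (hM₁ : M₁ = sSup ((fun u => ‖γ' u‖) '' (Set.Ioo (-(2*ε)) (2*ε) \ {0})))
    (hM₁bd : BddAbove ((fun u => ‖γ' u‖) '' (Set.Ioo (-(2*ε)) (2*ε) \ {0})))
    (hS₁ : S₁ = ⨆ u : ℝ, |deriv σ u|)
    (δ : ℝ) (hδ0 : 0 < δ) (hδε : δ ≤ ε)
 :
    ∀ t ∈ Set.Ioo (-ε) ε, ‖deriv (mollify φ σ δ γ) t‖ ≤ (1 + δ * S₁) * M₁ :=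
  mollify_deriv_bound_general ε hε1 φ σ hφsupp hφ0 hφint hσsm hσsupp hσ0 hσle γ hγcont γ' hγ'1 M₁ S₁
    hM₁ hM₁bd hS₁ δ hδ0 hδε
end

section
/- Let γ: (-2ε,2ε) → E be piecewise C² (with corner at 0), let γ₊′(0) and γ₋′(0) denote the right-hand and left-hand derivatives of γ at 0, and let δ ∈ (0,ε]. Then for every t with |t| < δ/4, γ_δ is twice differentiable at t and γ_δ″(t) = ∫_ℝ γ″(t − (δ²/100)s) φ(s) ds + (γ₊′(0) − γ₋′(0)) · (100/δ²) · φ(100t/δ²). -/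
/-!
For `|s| < δ/4` the scale `σ_δ(s)` is the constant `c = δ²/100`, so near `t` the mollification is
the convolution of `γ` with the rescaled kernel `φ_c(y) = c⁻¹ φ(y/c)` over `[-δ/2, δ/2]`.
Differentiating twice under the integral puts both derivatives on the kernel; integrating by parts
twice on `[-δ/2, 0]` and on `[0, δ/2]` moves them back onto `γ`. The outer boundary terms vanish
because `φ_c` is supported in `[-c, c]`; at the corner the terms with `γ 0` cancel, and the
one-sided derivatives of `γ` leave the jump `φ_c(t) • (γ₊'(0) - γ₋'(0))`.
-/

open MeasureTheory Set

open Filter Topology Function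

noncomputable def scaledKernel (φ : ℝ → ℝ) (c y : ℝ) : ℝ := c⁻¹ * φ (y / c)

section ScaledKernel

variable {φ : ℝ → ℝ} {c : ℝ}

theorem contDiff_scaledKernel {n : WithTop ℕ∞} (hφ : ContDiff ℝ n φ) (c : ℝ) :
    ContDiff ℝ n (scaledKernel φ c) :=
  contDiff_const.mul (hφ.comp (contDiff_id.div_const c))

theorem support_scaledKernel_subset (hφ : support φ ⊆ Icc (-1) 1) (hc : 0 < c) :
    support (scaledKernel φ c) ⊆ Icc (-c) c := by
  intro y hy
  have h := hφ (right_ne_zero_of_mul hy)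
  rw [mem_Icc, le_div_iff₀ hc, div_le_iff₀ hc] at h
  constructor <;> linarith [h.1, h.2]

theorem hasCompactSupport_scaledKernel (hφ : support φ ⊆ Icc (-1) 1) (hc : 0 < c) :
    HasCompactSupport (scaledKernel φ c) :=
  HasCompactSupport.intro isCompact_Icc fun _ hy =>
    notMem_support.1 (mt (@support_scaledKernel_subset _ _ hφ hc _) hy)

theorem integral_smul_comp_sub_mul_eq_intervalIntegral {E : Type*} [NormedAddCommGroup E]
    [NormedSpace ℝ E] (hφ : support φ ⊆ Icc (-1) 1) (hc : 0 < c) (f : ℝ → E) {s A B : ℝ}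
    (hA : A < s - c) (hB : s + c ≤ B) :
    ∫ u, φ u • f (s - c * u) = ∫ x in A..B, scaledKernel φ c (s - x) • f x := by
  have hrescale : ∫ u, φ u • f (s - c * u) = ∫ v, scaledKernel φ c v • f (s - v) := by
    have := Measure.integral_comp_mul_left (fun v => φ (v / c) • f (s - v)) c
    simp only [mul_div_cancel_left₀ _ hc.ne', abs_of_pos (inv_pos.2 hc)] at this
    rw [this, ← integral_smul]
    simp only [scaledKernel, smul_smul]
  have hvanish : ∀ x ∉ Ioc A B, scaledKernel φ c (s - x) • f x = 0 := by
    intro x hx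
    have : s - x ∉ Icc (-c) c := by
      simp only [mem_Ioc, not_and_or, not_lt, not_le] at hx
      simp only [mem_Icc, not_and_or, not_le]
      rcases hx with h | h
      · right; linarith
      · left; linarith
    rw [notMem_support.1 fun h => this (support_scaledKernel_subset hφ hc h), zero_smul]
  rw [hrescale, ← integral_sub_left_eq_self _ volume s,
    intervalIntegral.integral_of_le (by linarith),
    setIntegral_eq_integral_of_forall_compl_eq_zero hvanish]
  simp only [sub_sub_cancel]

end ScaledKernel

theorem mollify_eq_integral_of_abs_le {E : Type*} [NormedAddCommGroup E] [NormedSpace ℝ E]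
    {φ σ : ℝ → ℝ} {r a δ s : ℝ} (hσ : ∀ t, |t| ≤ r → σ t = a) (hδ : 0 < δ) (hs : |s| ≤ r * δ)
    (γ : ℝ → E) : mollify φ σ δ γ s = ∫ u, φ u • γ (s - δ ^ 2 * a * u) := by
  have hsδ : |s / δ| ≤ r := by rwa [abs_div, abs_of_pos hδ, div_le_iff₀ hδ]
  simp only [mollify, sigmaDel, hσ _ hsδ]

section Convolution

variable {E : Type*} [NormedAddCommGroup E] [NormedSpace ℝ E] {k : ℝ → ℝ} {f : ℝ → E} {A B : ℝ}

theorem hasDerivAt_intervalIntegral_sub_smul (hk : ContDiff ℝ 1 k) (hks : HasCompactSupport k)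
    (hf : IntervalIntegrable f volume A B) (s : ℝ) :
    HasDerivAt (fun s => ∫ x in A..B, k (s - x) • f x) (∫ x in A..B, deriv k (s - x) • f x) s := by
  obtain ⟨C, hC⟩ := hks.deriv.exists_bound_of_continuous (hk.continuous_deriv le_rfl)
  have hmeas : ∀ {g : ℝ → ℝ}, Continuous g → ∀ s : ℝ,
      AEStronglyMeasurable (fun x => g (s - x) • f x) (volume.restrict (uIoc A B)) := fun hg s =>
    (hg.comp (continuous_const.sub continuous_id)).aestronglyMeasurable.smul
      hf.def'.aestronglyMeasurable
  refine (intervalIntegral.hasDerivAt_integral_of_dominated_loc_of_deriv_le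
    (F := fun s x => k (s - x) • f x) (F' := fun s x => deriv k (s - x) • f x) univ_mem
    (Eventually.of_forall (hmeas hk.continuous)) ?_ (hmeas (hk.continuous_deriv le_rfl) s)
    (bound := fun x => C * ‖f x‖) ?_ (hf.norm.const_mul C) ?_).2
  · exact hf.continuousOn_smul
      (hk.continuous.comp (continuous_const.sub continuous_id)).continuousOn
  · refine Eventually.of_forall fun x _ y _ => ?_
    rw [norm_smul]
    exact mul_le_mul_of_nonneg_right (hC _) (norm_nonneg _)
  · refine Eventually.of_forall fun x _ y _ => ?_
    exact ((hk.differentiable one_ne_zero _).hasDerivAt.comp_sub_const y x).smul_const (f x)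

theorem hasDerivAt_deriv_of_eventuallyEq_intervalIntegral_sub_smul (hk : ContDiff ℝ 2 k)
    (hks : HasCompactSupport k) (hf : IntervalIntegrable f volume A B) {g : ℝ → E} {t : ℝ}
    (hg : g =ᶠ[𝓝 t] fun s => ∫ x in A..B, k (s - x) • f x) :
    HasDerivAt (deriv g) (∫ x in A..B, deriv (deriv k) (t - x) • f x) t := by
  have hk' : ContDiff ℝ 1 (deriv k) := (contDiff_succ_iff_deriv.mp hk).2.2
  have hderiv : deriv g =ᶠ[𝓝 t] fun s => ∫ x in A..B, deriv k (s - x) • f x := by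
    filter_upwards [hg.eventuallyEq_nhds] with s hs
    rw [hs.deriv_eq, (hasDerivAt_intervalIntegral_sub_smul (hk.of_le one_le_two) hks hf s).deriv]
  exact (hasDerivAt_intervalIntegral_sub_smul hk' hks.deriv hf t).congr_of_eventuallyEq hderiv

end Convolution

section IntegrationByParts

variable {E : Type*} [NormedAddCommGroup E] [NormedSpace ℝ E] {γ γ' γ'' : ℝ → E} {a b : ℝ}

theorem DifferentiableOn.hasDerivAt_derivWithin {s : Set ℝ} (h : DifferentiableOn ℝ γ s) {x : ℝ}
    (hs : s ∈ 𝓝 x) : HasDerivAt γ (derivWithin γ s x) x :=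
  (h x (mem_of_mem_nhds hs)).hasDerivWithinAt.hasDerivAt hs

theorem eqOn_derivWithin_derivWithin_Icc (hγ' : ∀ x ∈ Ioo a b, HasDerivAt γ (γ' x) x)
    (hγ'' : ∀ x ∈ Ioo a b, HasDerivAt γ' (γ'' x) x) :
    EqOn (derivWithin (derivWithin γ (Icc a b)) (Icc a b)) γ'' (Ioo a b) := by
  intro x hx
  have hfirst : derivWithin γ (Icc a b) =ᶠ[𝓝 x] γ' := by
    filter_upwards [Ioo_mem_nhds hx.1 hx.2] with y hy
    rw [derivWithin_of_mem_nhds (Icc_mem_nhds hy.1 hy.2), (hγ' y hy).deriv]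
  rw [derivWithin_of_mem_nhds (Icc_mem_nhds hx.1 hx.2), hfirst.deriv_eq, (hγ'' x hx).deriv]

theorem ContDiffOn.intervalIntegrable_of_hasDerivAt_Ioo (hγ : ContDiffOn ℝ 2 γ (Icc a b))
    (hab : a < b) (hγ' : ∀ x ∈ Ioo a b, HasDerivAt γ (γ' x) x)
    (hγ'' : ∀ x ∈ Ioo a b, HasDerivAt γ' (γ'' x) x) : IntervalIntegrable γ'' volume a b := by
  have hD : ContDiffOn ℝ 1 (derivWithin γ (Icc a b)) (Icc a b) :=
    hγ.derivWithin (uniqueDiffOn_Icc hab) (by norm_num)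
  have hcont := hD.continuousOn_derivWithin (uniqueDiffOn_Icc hab) le_rfl
  exact (hcont.intervalIntegrable_of_Icc hab.le).congr_uIoo
    (uIoo_of_le hab.le ▸ eqOn_derivWithin_derivWithin_Icc hγ' hγ'')

variable {k : ℝ → ℝ}

theorem intervalIntegrable_sub_smul_of_contDiffOn (hk : ContDiff ℝ 2 k) (t : ℝ) (hab : a < b)
    (hγ : ContDiffOn ℝ 2 γ (Icc a b)) (hγ' : ∀ x ∈ Ioo a b, HasDerivAt γ (γ' x) x)
    (hγ'' : ∀ x ∈ Ioo a b, HasDerivAt γ' (γ'' x) x) :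
    IntervalIntegrable (fun x => deriv (deriv k) (t - x) • γ x) volume a b ∧
      IntervalIntegrable (fun x => k (t - x) • γ'' x) volume a b := by
  have hsub : Continuous fun x : ℝ => t - x := continuous_const.sub continuous_id
  have hk'' : Continuous (deriv (deriv k)) :=
    (contDiff_succ_iff_deriv.mp hk).2.2.continuous_deriv le_rfl
  exact ⟨((hk''.comp hsub).continuousOn.smul hγ.continuousOn).intervalIntegrable_of_Icc hab.le,
    (hγ.intervalIntegrable_of_hasDerivAt_Ioo hab hγ' hγ'').continuousOn_smul
      (hk.continuous.comp hsub).continuousOn⟩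

variable [CompleteSpace E]

theorem integral_deriv_deriv_sub_smul_eq (hk : ContDiff ℝ 2 k) (t : ℝ) (hab : a < b)
    (hγ : ContDiffOn ℝ 2 γ (Icc a b)) (hγ' : ∀ x ∈ Ioo a b, HasDerivAt γ (γ' x) x)
    (hγ'' : ∀ x ∈ Ioo a b, HasDerivAt γ' (γ'' x) x) :
    ∫ x in a..b, deriv (deriv k) (t - x) • γ x =
      (deriv k (t - a) • γ a + k (t - a) • derivWithin γ (Icc a b) a)
        - (deriv k (t - b) • γ b + k (t - b) • derivWithin γ (Icc a b) b)
        + ∫ x in a..b, k (t - x) • γ'' x := by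
  set D := derivWithin γ (Icc a b)
  have hD : ContDiffOn ℝ 1 D (Icc a b) := hγ.derivWithin (uniqueDiffOn_Icc hab) (by norm_num)
  have hk' : ContDiff ℝ 1 (deriv k) := (contDiff_succ_iff_deriv.mp hk).2.2
  have hsub : Continuous fun x : ℝ => t - x := continuous_const.sub continuous_id
  have hkt : ∀ {g : ℝ → ℝ}, ContDiff ℝ 1 g → ∀ x,
      HasDerivAt (fun x => g (t - x)) (-deriv g (t - x)) x := fun hg x =>
    (hg.differentiable one_ne_zero _).hasDerivAt.comp_const_sub t x
  obtain ⟨hint₁, hint₂⟩ := intervalIntegrable_sub_smul_of_contDiffOn hk t hab hγ hγ' hγ''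
  have hftc := intervalIntegral.integral_eq_sub_of_hasDeriv_right_of_le hab.le
    (f := fun x => -(deriv k (t - x) • γ x + k (t - x) • D x))
    (f' := fun x => deriv (deriv k) (t - x) • γ x - k (t - x) • γ'' x)
    (((hk.continuous_deriv one_le_two).comp hsub).continuousOn.smul hγ.continuousOn
      |>.add ((hk.continuous.comp hsub).continuousOn.smul hD.continuousOn)).neg
    (fun x hx => ?_) (hint₁.sub hint₂)
  · rw [intervalIntegral.integral_sub hint₁ hint₂, sub_eq_iff_eq_add] at hftc
    rw [hftc]
    abel
  · have hγx : HasDerivAt γ (D x) x :=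
      (hγ.differentiableOn two_ne_zero).hasDerivAt_derivWithin (Icc_mem_nhds hx.1 hx.2)
    have hDx : HasDerivAt D (γ'' x) x := by
      rw [← eqOn_derivWithin_derivWithin_Icc hγ' hγ'' hx]
      exact (hD.differentiableOn one_ne_zero).hasDerivAt_derivWithin (Icc_mem_nhds hx.1 hx.2)
    exact ((((hkt hk' x).smul hγx).add ((hkt (hk.of_le one_le_two) x).smul hDx)).neg.congr_deriv
      (by module)).hasDerivWithinAt

theorem integral_deriv_deriv_sub_smul_eq_add_jump (hk : ContDiff ℝ 2 k) {c A B t : ℝ}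
    (hks : support k ⊆ Icc (-c) c) (hA : A < 0) (hB : 0 < B) (hAt : A + c < t) (htB : t + c < B)
    (hγm : ContDiffOn ℝ 2 γ (Icc A 0)) (hγp : ContDiffOn ℝ 2 γ (Icc 0 B))
    (hγ' : ∀ x ∈ Ioo A B, x ≠ 0 → HasDerivAt γ (γ' x) x)
    (hγ'' : ∀ x ∈ Ioo A B, x ≠ 0 → HasDerivAt γ' (γ'' x) x) {vp vm : E}
    (hvp : HasDerivWithinAt γ vp (Ici 0) 0) (hvm : HasDerivWithinAt γ vm (Iic 0) 0) :
    ∫ x in A..B, deriv (deriv k) (t - x) • γ x =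
      (∫ x in A..B, k (t - x) • γ'' x) + k t • (vp - vm) := by
  have hks' : support (deriv k) ⊆ Icc (-c) c :=
    support_deriv_subset.trans (closure_minimal hks isClosed_Icc)
  have hkA : k (t - A) = 0 := notMem_support.1 fun h => (hks h).2.not_gt (by linarith)
  have hk'A : deriv k (t - A) = 0 := notMem_support.1 fun h => (hks' h).2.not_gt (by linarith)
  have hkB : k (t - B) = 0 := notMem_support.1 fun h => (hks h).1.not_gt (by linarith)
  have hk'B : deriv k (t - B) = 0 := notMem_support.1 fun h => (hks' h).1.not_gt (by linarith)
  have hDm : derivWithin γ (Icc A 0) 0 = vm :=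
    (hvm.mono Icc_subset_Iic_self).derivWithin (uniqueDiffOn_Icc hA 0 ⟨hA.le, le_rfl⟩)
  have hDp : derivWithin γ (Icc 0 B) 0 = vp :=
    (hvp.mono Icc_subset_Ici_self).derivWithin (uniqueDiffOn_Icc hB 0 ⟨le_rfl, hB.le⟩)
  have hγ'm x (hx : x ∈ Ioo A 0) := hγ' x ⟨hx.1, hx.2.trans hB⟩ hx.2.ne
  have hγ''m x (hx : x ∈ Ioo A 0) := hγ'' x ⟨hx.1, hx.2.trans hB⟩ hx.2.ne
  have hγ'p x (hx : x ∈ Ioo 0 B) := hγ' x ⟨hA.trans hx.1, hx.2⟩ hx.1.ne'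
  have hγ''p x (hx : x ∈ Ioo 0 B) := hγ'' x ⟨hA.trans hx.1, hx.2⟩ hx.1.ne'
  obtain ⟨hm₁, hm₂⟩ := intervalIntegrable_sub_smul_of_contDiffOn hk t hA hγm hγ'm hγ''m
  obtain ⟨hp₁, hp₂⟩ := intervalIntegrable_sub_smul_of_contDiffOn hk t hB hγp hγ'p hγ''p
  rw [← intervalIntegral.integral_add_adjacent_intervals hm₁ hp₁,
    ← intervalIntegral.integral_add_adjacent_intervals hm₂ hp₂,
    integral_deriv_deriv_sub_smul_eq hk t hA hγm hγ'm hγ''m,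
    integral_deriv_deriv_sub_smul_eq hk t hB hγp hγ'p hγ''p, hDm, hDp, hkA, hk'A, hkB, hk'B,
    sub_zero]
  module

end IntegrationByParts

theorem mollify_second_deriv_near_corner_general
    {E : Type*} [NormedAddCommGroup E] [NormedSpace ℝ E] [CompleteSpace E]
    (ε : ℝ) (hε1 : ε ≤ 1)
    (φ σ : ℝ → ℝ)
    (hφsm : ContDiff ℝ (⊤ : ℕ∞) φ) (hφsupp : Function.support φ ⊆ Set.Icc (-1) 1)
    (hσeq : ∀ t : ℝ, |t| ≤ 1/4 → σ t = 1/100)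
    (γ : ℝ → E)
    (hγcont : ContinuousOn γ (Set.Ioo (-(2*ε)) (2*ε)))
    (hγm : ContDiffOn ℝ 2 γ (Set.Ioc (-(2*ε)) 0))
    (hγp : ContDiffOn ℝ 2 γ (Set.Ico 0 (2*ε)))
    (γ' : ℝ → E)
    (hγ'1 : ∀ u ∈ Set.Ioo (-(2*ε)) (2*ε), u ≠ 0 → HasDerivAt γ (γ' u) u)
    (γ'' : ℝ → E)
    (hγ''1 : ∀ u ∈ Set.Ioo (-(2*ε)) (2*ε), u ≠ 0 → HasDerivAt γ' (γ'' u) u)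
    (vp vm : E)
    (hvp : HasDerivWithinAt γ vp (Set.Ici 0) 0)
    (hvm : HasDerivWithinAt γ vm (Set.Iic 0) 0)
    (δ : ℝ) (hδ0 : 0 < δ) (hδε : δ ≤ ε)
 :
    ∀ t : ℝ, |t| < δ/4 →
      HasDerivAt (deriv (mollify φ σ δ γ))
        ((∫ s : ℝ, φ s • γ'' (t - δ^2/100 * s)) +
          ((100/δ^2) * φ (100 * t/δ^2)) • (vp - vm)) t := by
  intro t ht
  obtain ⟨ht₁, ht₂⟩ := abs_lt.mp ht
  set c := δ ^ 2 / 100 with hc_def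
  have hc : 0 < c := by positivity
  have hcδ : c < δ / 4 := by nlinarith [hδε.trans hε1]
  have hk : ContDiff ℝ 2 (scaledKernel φ c) := (contDiff_scaledKernel hφsm c).of_le (by norm_cast)
  have hmoll : mollify φ σ δ γ =ᶠ[𝓝 t]
      fun s => ∫ x in -(δ / 2)..δ / 2, scaledKernel φ c (s - x) • γ x := by
    filter_upwards [Ioo_mem_nhds ht₁ ht₂] with s hs
    rw [mollify_eq_integral_of_abs_le hσeq hδ0 (abs_le.2 ⟨by linarith [hs.1], by linarith [hs.2]⟩),
      mul_one_div]
    exact integral_smul_comp_sub_mul_eq_intervalIntegral hφsupp hc γ (by linarith [hs.1])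
      (by linarith [hs.2])
  have hIoo : Ioo (-(δ / 2)) (δ / 2) ⊆ Ioo (-(2 * ε)) (2 * ε) :=
    Ioo_subset_Ioo (by linarith) (by linarith)
  have key := hasDerivAt_deriv_of_eventuallyEq_intervalIntegral_sub_smul hk
    (hasCompactSupport_scaledKernel hφsupp hc)
    ((hγcont.mono (Icc_subset_Ioo (by linarith) (by linarith))).intervalIntegrable_of_Icc
      (by linarith)) hmoll
  rw [integral_deriv_deriv_sub_smul_eq_add_jump hk (support_scaledKernel_subset hφsupp hc)
    (by linarith) (by linarith) (by linarith) (by linarith)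
    (hγm.mono (Icc_subset_Ioc_iff (by linarith) |>.2 ⟨by linarith, le_rfl⟩))
    (hγp.mono (Icc_subset_Ico_iff (by linarith) |>.2 ⟨le_rfl, by linarith⟩))
    (fun x hx => hγ'1 x (hIoo hx)) (fun x hx => hγ''1 x (hIoo hx)) hvp hvm,
    ← integral_smul_comp_sub_mul_eq_intervalIntegral hφsupp hc γ'' (by linarith) (by linarith)]
    at key
  convert key using 3
  simp only [scaledKernel, hc_def, inv_div]
  congr 2
  ring

theorem mollify_second_deriv_near_corner
    {E : Type*} [NormedAddCommGroup E] [NormedSpace ℝ E] [CompleteSpace E]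
    (ε : ℝ) (hε0 : 0 < ε) (hε1 : ε ≤ 1)
    (φ σ : ℝ → ℝ)
    (hφsm : ContDiff ℝ (⊤ : ℕ∞) φ) (hφsupp : Function.support φ ⊆ Set.Icc (-1) 1)
    (hφ0 : ∀ t, 0 ≤ φ t) (hφ1 : ∀ t, φ t ≤ 1) (hφint : (∫ t : ℝ, φ t) = 1)
    (hσsm : ContDiff ℝ (⊤ : ℕ∞) σ) (hσsupp : Function.support σ ⊆ Set.Icc (-(1/2)) (1/2))
    (hσ0 : ∀ t, 0 ≤ σ t) (hσle : ∀ t, σ t ≤ 1/100)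
    (hσeq : ∀ t : ℝ, |t| ≤ 1/4 → σ t = 1/100)
    (hσpos : ∀ t : ℝ, 1/4 < |t| → |t| < 1/2 → 0 < σ t)
    (γ : ℝ → E)
    (hγcont : ContinuousOn γ (Set.Ioo (-(2*ε)) (2*ε)))
    (hγm : ContDiffOn ℝ 2 γ (Set.Ioc (-(2*ε)) 0))
    (hγp : ContDiffOn ℝ 2 γ (Set.Ico 0 (2*ε)))
    (γ' : ℝ → E)
    (hγ'1 : ∀ u ∈ Set.Ioo (-(2*ε)) (2*ε), u ≠ 0 → HasDerivAt γ (γ' u) u)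
    (hγ'0 : HasDerivWithinAt γ (γ' 0) (Set.Ici 0) 0)
    (γ'' : ℝ → E)
    (hγ''1 : ∀ u ∈ Set.Ioo (-(2*ε)) (2*ε), u ≠ 0 → HasDerivAt γ' (γ'' u) u)
    (hγ''0 : HasDerivWithinAt γ' (γ'' 0) (Set.Ici 0) 0)
    (vp vm : E)
    (hvp : HasDerivWithinAt γ vp (Set.Ici 0) 0)
    (hvm : HasDerivWithinAt γ vm (Set.Iic 0) 0)
    (δ : ℝ) (hδ0 : 0 < δ) (hδε : δ ≤ ε)
 :
    ∀ t : ℝ, |t| < δ/4 →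
      HasDerivAt (deriv (mollify φ σ δ γ))
        ((∫ s : ℝ, φ s • γ'' (t - δ^2/100 * s)) +
          ((100/δ^2) * φ (100 * t/δ^2)) • (vp - vm)) t :=
  mollify_second_deriv_near_corner_general ε hε1 φ σ hφsm hφsupp hσeq γ hγcont hγm hγp γ' hγ'1 γ''
    hγ''1 vp vm hvp hvm δ hδ0 hδε
end

section
/- Let γ: (-2ε,2ε) → E be piecewise C² (with corner at 0) and let δ ∈ (0,ε]. Then for every t ∈ (-ε,ε) with |t| > δ²/100, γ_δ is twice differentiable at t and γ_δ″(t) = ∫_ℝ γ″(t − σ_δ(t)s) · (1 − s·δ·σ′(t/δ))² · φ(s) ds − ∫_ℝ γ′(t − σ_δ(t)s) · s · σ″(t/δ) · φ(s) ds. -/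
open MeasureTheory Set

/-!
Since `0 ≤ σ_δ ≤ δ²/100 < |t|`, for `x` near `t` and `|s| ≤ 1` the points `x - σ_δ(x) s` stay in a
compact interval on one side of the corner, where `γ` is `C²` with derivatives `γ'`, `γ''`.
There the integrand `φ(s) γ(x - σ_δ(x) s)` may be differentiated twice in `x` under the integral
sign, the domination coming from compactness of (closed neighbourhood of `t`) × `[-1, 1]`.
-/

open Filter Topology Function

section Calculus

variable {E : Type*} [NormedAddCommGroup E] [NormedSpace ℝ E]

theorem ContDiffOn.continuousOn_second_deriv_of_isOpen {f f' f'' : ℝ → E} {U : Set ℝ}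
    (hf : ContDiffOn ℝ 2 f U) (hU : IsOpen U) (hf' : ∀ u ∈ U, HasDerivAt f (f' u) u)
    (hf'' : ∀ u ∈ U, HasDerivAt f' (f'' u) u) : ContinuousOn f'' U := by
  have hf'_smooth : ContDiffOn ℝ 1 f' U :=
    (hf.deriv_of_isOpen hU (by norm_num)).congr fun u hu => (hf' u hu).deriv.symm
  exact (hf'_smooth.continuousOn_deriv_of_isOpen hU le_rfl).congr fun u hu => (hf'' u hu).deriv.symm

theorem contDiffOn_Ioo_diff_singleton {f : ℝ → E} {n : WithTop ℕ∞} {a b c : ℝ}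
    (hab : ContDiffOn ℝ n f (Ioc a b)) (hbc : ContDiffOn ℝ n f (Ico b c)) :
    ContDiffOn ℝ n f (Ioo a c \ {b}) := by
  rintro u ⟨⟨hau, huc⟩, hub⟩
  rcases lt_or_gt_of_ne hub with hlt | hgt
  · exact ((hab u ⟨hau, hlt.le⟩).contDiffAt (Ioc_mem_nhds hau hlt)).contDiffWithinAt
  · exact ((hbc u ⟨hgt.le, huc⟩).contDiffAt (Ico_mem_nhds hgt huc)).contDiffWithinAt

variable {ψ ψ' k k' : ℝ → ℝ → ℝ} {g g' : ℝ → E} {U K : Set ℝ} {x₀ : ℝ}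

theorem hasDerivAt_setIntegral_smul_comp (hK : IsCompact K)
    (hkU : ∀ᶠ x in 𝓝 x₀, ∀ s ∈ K, k x s ∈ U)
    (hg : ∀ u ∈ U, HasDerivAt g (g' u) u) (hg' : ContinuousOn g' U)
    (hψ : ∀ x s, HasDerivAt (ψ · s) (ψ' x s) x) (hk : ∀ x s, HasDerivAt (k · s) (k' x s) x)
    (hψc : Continuous ↿ψ) (hψ'c : Continuous ↿ψ') (hkc : Continuous ↿k) (hk'c : Continuous ↿k') :
    HasDerivAt (fun x => ∫ s in K, ψ x s • g (k x s))
      ((∫ s in K, (k' x₀ s * ψ x₀ s) • g' (k x₀ s)) + ∫ s in K, ψ' x₀ s • g (k x₀ s)) x₀ := by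
  obtain ⟨r, hr, hrU⟩ := Metric.nhds_basis_closedBall.eventually_iff.1 hkU
  set S := Metric.closedBall x₀ r ×ˢ K
  have hkS : MapsTo ↿k S U := fun p hp => hrU hp.1 p.2 hp.2
  have hgc : ContinuousOn g U := fun u hu => (hg u hu).continuousAt.continuousWithinAt
  have hFc : ContinuousOn ↿(fun x s => ψ x s • g (k x s)) S :=
    hψc.continuousOn.smul (hgc.comp hkc.continuousOn hkS)
  have hGc : ContinuousOn ↿(fun x s => (k' x s * ψ x s) • g' (k x s)) S :=
    (hk'c.mul hψc).continuousOn.smul (hg'.comp hkc.continuousOn hkS)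
  have hHc : ContinuousOn ↿(fun x s => ψ' x s • g (k x s)) S :=
    hψ'c.continuousOn.smul (hgc.comp hkc.continuousOn hkS)
  have slice : ∀ {F : ℝ → ℝ → E}, ContinuousOn ↿F S →
      ∀ x ∈ Metric.closedBall x₀ r, ContinuousOn (F x) K := fun hF x hx =>
    hF.comp (Continuous.prodMk_right x).continuousOn fun s hs => ⟨hx, hs⟩
  obtain ⟨C, hC⟩ := (isCompact_closedBall x₀ r |>.prod hK).exists_bound_of_continuousOn
    (hGc.add hHc)
  have hx₀ : x₀ ∈ Metric.closedBall x₀ r := Metric.mem_closedBall_self hr.le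
  have hGint := (slice hGc x₀ hx₀).integrableOn_compact (μ := volume) hK
  have hHint := (slice hHc x₀ hx₀).integrableOn_compact (μ := volume) hK
  rw [← integral_add hGint hHint]
  refine (hasDerivAt_integral_of_dominated_loc_of_deriv_le (bound := fun _ => C)
    (F' := fun x s => (k' x s * ψ x s) • g' (k x s) + ψ' x s • g (k x s))
    (Metric.ball_mem_nhds x₀ hr) ?_ ((slice hFc x₀ hx₀).integrableOn_compact hK)
    (hGint.add hHint).aestronglyMeasurable ?_ (integrableOn_const hK.measure_lt_top.ne) ?_).2
  · filter_upwards [Metric.closedBall_mem_nhds x₀ hr] with x hx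
    exact (slice hFc x hx).aestronglyMeasurable hK.measurableSet
  · filter_upwards [ae_restrict_mem hK.measurableSet] with s hs x hx
    exact hC (x, s) ⟨Metric.ball_subset_closedBall hx, hs⟩
  · filter_upwards [ae_restrict_mem hK.measurableSet] with s hs x hx
    have hgk := (hg _ (hrU (Metric.ball_subset_closedBall hx) s hs)).scomp x (hk x s)
    convert (hψ x s).smul hgk using 1
    · rfl
    · rw [comp_apply, smul_smul, mul_comm]

theorem hasDerivAt_integral_smul_comp (hK : IsCompact K)
    (hkU : ∀ᶠ x in 𝓝 x₀, ∀ s ∈ K, k x s ∈ U)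
    (hg : ∀ u ∈ U, HasDerivAt g (g' u) u) (hg' : ContinuousOn g' U)
    (hψ : ∀ x s, HasDerivAt (ψ · s) (ψ' x s) x) (hk : ∀ x s, HasDerivAt (k · s) (k' x s) x)
    (hψc : Continuous ↿ψ) (hψ'c : Continuous ↿ψ') (hkc : Continuous ↿k) (hk'c : Continuous ↿k')
    (hψK : ∀ x, ∀ s ∉ K, ψ x s = 0) :
    HasDerivAt (fun x => ∫ s, ψ x s • g (k x s))
      ((∫ s, (k' x₀ s * ψ x₀ s) • g' (k x₀ s)) + ∫ s, ψ' x₀ s • g (k x₀ s)) x₀ := by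
  have hψ'K : ∀ x, ∀ s ∉ K, ψ' x s = 0 := fun x s hs =>
    (hψ x s).unique (by simpa only [hψK _ s hs] using hasDerivAt_const x (0 : ℝ))
  have hrestrict : ∀ {F : ℝ → E}, (∀ s ∉ K, F s = 0) → ∫ s in K, F s = ∫ s, F s :=
    setIntegral_eq_integral_of_forall_compl_eq_zero
  have hfun : (fun x => ∫ s, ψ x s • g (k x s)) = fun x => ∫ s in K, ψ x s • g (k x s) :=
    funext fun x => (hrestrict fun s hs => by simp only [hψK x s hs, zero_smul]).symm
  rw [hfun, ← hrestrict fun s hs => by simp only [hψK x₀ s hs, mul_zero, zero_smul],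
    ← hrestrict fun s hs => by simp only [hψ'K x₀ s hs, zero_smul]]
  exact hasDerivAt_setIntegral_smul_comp hK hkU hg hg' hψ hk hψc hψ'c hkc hk'c

end Calculus

theorem hasDerivAt_const_mul_comp_div {f : ℝ → ℝ} {c δ x : ℝ} (hf : DifferentiableAt ℝ f (x / δ)) :
    HasDerivAt (fun y => c * f (y / δ)) (c / δ * deriv f (x / δ)) x := by
  rw [div_mul_eq_mul_div, mul_div_assoc, ← mul_one_div (deriv f _)]
  exact (hf.hasDerivAt.comp x ((hasDerivAt_id' x).div_const δ)).const_mul c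

theorem eventually_sub_mul_mem_Ioo_diff_zero {a : ℝ → ℝ} {c t ε : ℝ} (ha : ∀ x, |a x| ≤ c)
    (hct : c < |t|) (htε : |t| < ε) :
    ∀ᶠ x in 𝓝 t, ∀ s ∈ Icc (-1 : ℝ) 1, x - a x * s ∈ Ioo (-(2 * ε)) (2 * ε) \ {0} := by
  filter_upwards [Metric.ball_mem_nhds t (sub_pos.2 hct)] with x hx s hs
  rw [Metric.mem_ball, Real.dist_eq] at hx
  have has : |a x * s| ≤ c := by
    rw [abs_mul]
    simpa using mul_le_mul (ha x) (abs_le.2 hs) (abs_nonneg s) ((abs_nonneg _).trans (ha x))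
  have hdist : |x - a x * s - t| < |t| :=
    calc |x - a x * s - t| = |(x - t) - a x * s| := by ring_nf
      _ ≤ |x - t| + |a x * s| := abs_sub _ _
      _ < |t| := by linarith
  refine ⟨abs_lt.1 ?_, fun h0 => ?_⟩
  · calc |x - a x * s| = |(x - a x * s - t) + t| := by ring_nf
      _ ≤ |x - a x * s - t| + |t| := abs_add_le _ _
      _ < 2 * ε := by linarith
  · rw [mem_singleton_iff.1 h0, zero_sub, abs_neg] at hdist
    exact lt_irrefl _ hdist

section SigmaDel

variable {σ : ℝ → ℝ} {δ : ℝ}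

theorem abs_sigmaDel_le (hσ0 : ∀ t, 0 ≤ σ t) (hσle : ∀ t, σ t ≤ 1 / 100) (x : ℝ) :
    |sigmaDel σ δ x| ≤ δ ^ 2 / 100 := by
  rw [sigmaDel, abs_of_nonneg (mul_nonneg (sq_nonneg δ) (hσ0 _))]
  nlinarith [hσle (x / δ), sq_nonneg δ]

theorem continuous_sigmaDel (hσ : Continuous σ) : Continuous (sigmaDel σ δ) := by
  unfold sigmaDel
  fun_prop

theorem hasDerivAt_sub_sigmaDel_mul {x : ℝ} (hσ : DifferentiableAt ℝ σ (x / δ)) (hδ : δ ≠ 0)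
    (s : ℝ) :
    HasDerivAt (fun y => y - sigmaDel σ δ y * s) (1 - s * δ * deriv σ (x / δ)) x := by
  have h := (hasDerivAt_id' x).sub ((hasDerivAt_const_mul_comp_div (c := δ ^ 2) hσ).mul_const s)
  rw [show δ ^ 2 / δ = δ by rw [sq, mul_div_cancel_right₀ _ hδ]] at h
  rw [mul_assoc, mul_comm s]
  exact h

theorem hasDerivAt_one_sub_mul_deriv_comp_div_mul {x : ℝ}
    (hσ' : DifferentiableAt ℝ (deriv σ) (x / δ)) (hδ : δ ≠ 0) (s c : ℝ) :
    HasDerivAt (fun y => (1 - s * δ * deriv σ (y / δ)) * c)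
      (-(s * deriv (deriv σ) (x / δ) * c)) x := by
  have h := (((hasDerivAt_const_mul_comp_div (c := δ) hσ').const_mul s).const_sub 1).mul_const c
  simp only [div_self hδ, one_mul, ← mul_assoc, neg_mul] at h
  exact h

end SigmaDel

theorem hasDerivAt_mollify {E : Type*} [NormedAddCommGroup E] [NormedSpace ℝ E]
    {φ σ : ℝ → ℝ} {δ x : ℝ} {γ γ' : ℝ → E} {U : Set ℝ} (hφ : Continuous φ)
    (hφsupp : support φ ⊆ Icc (-1) 1) (hσ : ContDiff ℝ 1 σ) (hδ : δ ≠ 0)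
    (hγ : ∀ u ∈ U, HasDerivAt γ (γ' u) u) (hγ' : ContinuousOn γ' U)
    (hU : ∀ᶠ y in 𝓝 x, ∀ s ∈ Icc (-1 : ℝ) 1, y - sigmaDel σ δ y * s ∈ U) :
    HasDerivAt (mollify φ σ δ γ)
      (∫ s, ((1 - s * δ * deriv σ (x / δ)) * φ s) • γ' (x - sigmaDel σ δ x * s)) x := by
  have hσc := hσ.continuous
  have hσ'c := hσ.continuous_deriv le_rfl
  have hσδc := continuous_sigmaDel (δ := δ) hσc
  have h := hasDerivAt_integral_smul_comp (ψ := fun _ s => φ s) (ψ' := fun _ _ => 0) isCompact_Icc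
    hU hγ hγ' (fun x s => hasDerivAt_const x (φ s))
    (fun y => hasDerivAt_sub_sigmaDel_mul (hσ.differentiable one_ne_zero _) hδ)
    (by fun_prop) (by fun_prop) (by fun_prop) (by fun_prop)
    fun _ s hs => notMem_support.1 fun h => hs (hφsupp h)
  simp only [zero_smul, integral_zero, add_zero] at h
  exact h

theorem mollify_second_deriv_away_from_corner_general
    {E : Type*} [NormedAddCommGroup E] [NormedSpace ℝ E]
    (ε : ℝ)
    (φ σ : ℝ → ℝ)
    (hφsm : ContDiff ℝ (⊤ : ℕ∞) φ) (hφsupp : Function.support φ ⊆ Set.Icc (-1) 1)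
    (hσsm : ContDiff ℝ (⊤ : ℕ∞) σ)
    (hσ0 : ∀ t, 0 ≤ σ t) (hσle : ∀ t, σ t ≤ 1/100)
    (γ : ℝ → E)
    (hγm : ContDiffOn ℝ 2 γ (Set.Ioc (-(2*ε)) 0))
    (hγp : ContDiffOn ℝ 2 γ (Set.Ico 0 (2*ε)))
    (γ' : ℝ → E)
    (hγ'1 : ∀ u ∈ Set.Ioo (-(2*ε)) (2*ε), u ≠ 0 → HasDerivAt γ (γ' u) u)
    (γ'' : ℝ → E)
    (hγ''1 : ∀ u ∈ Set.Ioo (-(2*ε)) (2*ε), u ≠ 0 → HasDerivAt γ' (γ'' u) u)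
    (δ : ℝ) (hδ0 : 0 < δ)
 :
    ∀ t ∈ Set.Ioo (-ε) ε, δ^2/100 < |t| →
      HasDerivAt (deriv (mollify φ σ δ γ))
        ((∫ s : ℝ, ((1 - s * δ * deriv σ (t/δ))^2 * φ s) • γ'' (t - sigmaDel σ δ t * s)) -
          (∫ s : ℝ, (s * deriv (deriv σ) (t/δ) * φ s) • γ' (t - sigmaDel σ δ t * s))) t := by
  intro t ht hct
  set U := Ioo (-(2 * ε)) (2 * ε) \ {0}
  have hγ' : ∀ u ∈ U, HasDerivAt γ (γ' u) u := fun u hu => hγ'1 u hu.1 hu.2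
  have hγ'' : ∀ u ∈ U, HasDerivAt γ' (γ'' u) u := fun u hu => hγ''1 u hu.1 hu.2
  have hγ'c : ContinuousOn γ' U := fun u hu => (hγ'' u hu).continuousAt.continuousWithinAt
  have hγ''c : ContinuousOn γ'' U :=
    (contDiffOn_Ioo_diff_singleton hγm hγp).continuousOn_second_deriv_of_isOpen
      (isOpen_Ioo.sdiff isClosed_singleton) hγ' hγ''
  have hkU := eventually_sub_mul_mem_Ioo_diff_zero (abs_sigmaDel_le hσ0 hσle) hct (abs_lt.2 ht)
  have hfirst : ∀ᶠ x in 𝓝 t, HasDerivAt (mollify φ σ δ γ)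
      (∫ s, ((1 - s * δ * deriv σ (x / δ)) * φ s) • γ' (x - sigmaDel σ δ x * s)) x :=
    hkU.eventually_nhds.mono fun x hx =>
      hasDerivAt_mollify hφsm.continuous hφsupp (hσsm.of_le (by simp)) hδ0.ne' hγ' hγ'c hx
  have hσ' : ContDiff ℝ (⊤ : ℕ∞) (deriv σ) := (contDiff_infty_iff_deriv.1 hσsm).2
  have hφc := hφsm.continuous
  have hσ'c := hσ'.continuous
  have hσ''c := hσ'.continuous_deriv (by simp)
  have hσδc := continuous_sigmaDel (δ := δ) hσsm.continuous
  have hsecond := hasDerivAt_integral_smul_comp isCompact_Icc hkU hγ'' hγ''c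
    (fun x s => hasDerivAt_one_sub_mul_deriv_comp_div_mul (hσ'.differentiable (by simp) _)
      hδ0.ne' s (φ s))
    (fun x => hasDerivAt_sub_sigmaDel_mul (hσsm.differentiable (by simp) _) hδ0.ne')
    (by fun_prop) (by fun_prop) (by fun_prop) (by fun_prop)
    fun x s hs => by rw [notMem_support.1 fun h => hs (hφsupp h), mul_zero]
  convert hsecond.congr_of_eventuallyEq (hfirst.mono fun x hx => hx.deriv) using 1
  rw [sub_eq_add_neg, ← integral_neg]
  congr 2 <;> ext s
  · rw [sq, mul_assoc]
  · rw [neg_smul]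

theorem mollify_second_deriv_away_from_corner
    {E : Type*} [NormedAddCommGroup E] [NormedSpace ℝ E] [CompleteSpace E]
    (ε : ℝ) (hε0 : 0 < ε) (hε1 : ε ≤ 1)
    (φ σ : ℝ → ℝ)
    (hφsm : ContDiff ℝ (⊤ : ℕ∞) φ) (hφsupp : Function.support φ ⊆ Set.Icc (-1) 1)
    (hφ0 : ∀ t, 0 ≤ φ t) (hφ1 : ∀ t, φ t ≤ 1) (hφint : (∫ t : ℝ, φ t) = 1)
    (hσsm : ContDiff ℝ (⊤ : ℕ∞) σ) (hσsupp : Function.support σ ⊆ Set.Icc (-(1/2)) (1/2))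
    (hσ0 : ∀ t, 0 ≤ σ t) (hσle : ∀ t, σ t ≤ 1/100)
    (hσeq : ∀ t : ℝ, |t| ≤ 1/4 → σ t = 1/100)
    (hσpos : ∀ t : ℝ, 1/4 < |t| → |t| < 1/2 → 0 < σ t)
    (γ : ℝ → E)
    (hγcont : ContinuousOn γ (Set.Ioo (-(2*ε)) (2*ε)))
    (hγm : ContDiffOn ℝ 2 γ (Set.Ioc (-(2*ε)) 0))
    (hγp : ContDiffOn ℝ 2 γ (Set.Ico 0 (2*ε)))
    (γ' : ℝ → E)
    (hγ'1 : ∀ u ∈ Set.Ioo (-(2*ε)) (2*ε), u ≠ 0 → HasDerivAt γ (γ' u) u)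
    (hγ'0 : HasDerivWithinAt γ (γ' 0) (Set.Ici 0) 0)
    (γ'' : ℝ → E)
    (hγ''1 : ∀ u ∈ Set.Ioo (-(2*ε)) (2*ε), u ≠ 0 → HasDerivAt γ' (γ'' u) u)
    (hγ''0 : HasDerivWithinAt γ' (γ'' 0) (Set.Ici 0) 0)
    (δ : ℝ) (hδ0 : 0 < δ) (hδε : δ ≤ ε)
 :
    ∀ t ∈ Set.Ioo (-ε) ε, δ^2/100 < |t| →
      HasDerivAt (deriv (mollify φ σ δ γ))
        ((∫ s : ℝ, ((1 - s * δ * deriv σ (t/δ))^2 * φ s) • γ'' (t - sigmaDel σ δ t * s)) -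
          (∫ s : ℝ, (s * deriv (deriv σ) (t/δ) * φ s) • γ' (t - sigmaDel σ δ t * s))) t :=
  mollify_second_deriv_away_from_corner_general ε φ σ hφsm hφsupp hσsm hσ0 hσle γ hγm hγp γ' hγ'1
    γ'' hγ''1 δ hδ0
end
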